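/- arXiv:1303.1036 — 4 statements merged into one kernel-verified Lean document; each statement's English description precedes it below -/
import Mathlib

section
/- Let K : G × G → ℝ be measurable with |K(x,τ)| ≤ C for almost every (x,τ) ∈ G × G, where C ≥ 0 is a constant, and let 1 ≤ p ≤ ∞. Then for every Z ∈ L_p(G) there exists a unique b ∈ L_p(G) such that b(x₁,x₂,x₃,x₄) + ∫₀^{x₁}∫₀^{x₂}∫₀^{x₃}∫₀^{x₄} K(x,τ) b(τ₁,τ₂,τ₃,τ₄) dτ₄ dτ₃ dτ₂ dτ₁ = Z(x₁,x₂,x₃,x₄) for almost every x ∈ G; moreover there exists a constant M ≥ 0, depending only on C, h₁, h₂, h₃, h₄ and p (and not on Z), such that ‖b‖_{L_p(G)} ≤ M ‖Z‖_{L_p(G)}. -/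
open MeasureTheory Set
open scoped ENNReal

/-- The box `G = (0,h₁) × (0,h₂) × (0,h₃) × (0,h₄)` in `ℝ⁴`. -/
def volterraBox (h₁ h₂ h₃ h₄ : ℝ) : Set (ℝ × ℝ × ℝ × ℝ) :=
  Ioo 0 h₁ ×ˢ Ioo 0 h₂ ×ˢ Ioo 0 h₃ ×ˢ Ioo 0 h₄

/-!
In the first variable, `T f (x) = ∫_{(0,x]} K(x,τ) f(τ) dτ` is a Volterra operator: if
`|f τ| ≤ a τ₁ⁿ` on `G` then `|T f x| ≤ C h₂h₃h₄ a x₁ⁿ⁺¹/(n+1)`, so `|Tⁿ⁺¹ f| ≤ C ‖f‖₁ (C|G|)ⁿ/n!`.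
Hence the Neumann series `b = Σ (-T)ⁿ Z` converges, with
`|b - Z| ≤ C e^{C|G|} ‖Z‖₁ ≤ C e^{C|G|} |G|^{1-1/p} ‖Z‖_p`, which gives the `L_p` estimate.
The difference of two solutions is a fixed point of `-T`, so the same bound forces it to vanish.
-/

local notation "ℝ⁴" => ℝ × ℝ × ℝ × ℝ

open Filter

section ProdIntegral

variable {α β : Type*} [MeasureSpace α] [MeasureSpace β] [SFinite (volume : Measure α)]
  [SFinite (volume : Measure β)]

theorem setIntegral_prod_volume {s : Set α} {t : Set β} {g : α × β → ℝ}
    (hg : IntegrableOn g (s ×ˢ t)) : ∫ z in s ×ˢ t, g z = ∫ a in s, ∫ y in t, g (a, y) := by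
  rw [Measure.volume_eq_prod] at hg ⊢
  exact setIntegral_prod g hg

theorem ae_integrableOn_prod_section {s : Set α} {t : Set β} {g : α × β → ℝ}
    (hg : IntegrableOn g (s ×ˢ t)) :
    ∀ᵐ a ∂volume.restrict s, IntegrableOn (fun y ↦ g (a, y)) t := by
  rw [IntegrableOn, Measure.volume_eq_prod, ← Measure.prod_restrict] at hg
  exact hg.prod_right_ae

theorem setIntegral_Ioc_prod_fst_pow {s : ℝ} (hs : 0 ≤ s) (t : Set β) (n : ℕ) :
    ∫ z in Ioc 0 s ×ˢ t, z.1 ^ n = s ^ (n + 1) / (n + 1) * volume.real t := by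
  have := setIntegral_prod_mul (μ := (volume : Measure ℝ)) (ν := (volume : Measure β))
      (fun a : ℝ ↦ a ^ n) (fun _ ↦ (1 : ℝ)) (Ioc 0 s) t
  rw [← Measure.volume_eq_prod] at this
  simp only [mul_one] at this
  rw [this, ← intervalIntegral.integral_of_le hs, integral_pow, setIntegral_const, smul_eq_mul,
    mul_one]
  simp

theorem integrableOn_Ioc_prod_fst_pow (s : ℝ) {t : Set β} (ht : volume t ≠ ⊤) (n : ℕ) :
    IntegrableOn (fun z : ℝ × β ↦ z.1 ^ n) (Ioc 0 s ×ˢ t) := by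
  refine Measure.integrableOn_of_bounded (M := s ^ n) ?_ (by fun_prop) ?_
  · rw [Measure.volume_eq_prod, Measure.prod_prod]
    exact ENNReal.mul_ne_top (by simp) ht
  · filter_upwards [ae_restrict_of_ae_restrict_of_subset (prod_mono_right (subset_univ t))
      (ae_restrict_mem (measurableSet_Ioc.prod MeasurableSet.univ))] with z hz
    rw [Real.norm_of_nonneg (pow_nonneg hz.1.1.le n)]
    exact pow_le_pow_left₀ hz.1.1.le hz.1.2 n

end ProdIntegral

theorem volume_real_Ioc_prod_Ioc_prod_Ioc {a b c : ℝ} (ha : 0 ≤ a) (hb : 0 ≤ b) (hc : 0 ≤ c) :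
    volume.real (Ioc 0 a ×ˢ Ioc 0 b ×ˢ Ioc 0 c) = a * b * c := by
  simp [Measure.volume_eq_prod, measureReal_prod_prod, ha, hb, hc, mul_assoc]

theorem setIntegral_Ioc_prod4_eq_intervalIntegral {a₁ b₁ a₂ b₂ a₃ b₃ a₄ b₄ : ℝ}
    (h₁ : a₁ ≤ b₁) (h₂ : a₂ ≤ b₂) (h₃ : a₃ ≤ b₃) (h₄ : a₄ ≤ b₄) {g : ℝ⁴ → ℝ}
    (hg : IntegrableOn g (Ioc a₁ b₁ ×ˢ Ioc a₂ b₂ ×ˢ Ioc a₃ b₃ ×ˢ Ioc a₄ b₄)) :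
    ∫ τ in Ioc a₁ b₁ ×ˢ Ioc a₂ b₂ ×ˢ Ioc a₃ b₃ ×ˢ Ioc a₄ b₄, g τ =
      ∫ τ₁ in a₁..b₁, ∫ τ₂ in a₂..b₂, ∫ τ₃ in a₃..b₃, ∫ τ₄ in a₄..b₄, g (τ₁, τ₂, τ₃, τ₄) := by
  simp only [intervalIntegral.integral_of_le, *]
  rw [setIntegral_prod_volume hg]
  refine integral_congr_ae ?_
  filter_upwards [ae_integrableOn_prod_section hg] with τ₁ hg₁
  rw [setIntegral_prod_volume hg₁]
  refine integral_congr_ae ?_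
  filter_upwards [ae_integrableOn_prod_section hg₁] with τ₂ hg₂
  rw [setIntegral_prod_volume hg₂]

theorem eq_zero_of_abs_le_pow_div_factorial {y m r : ℝ}
    (h : ∀ n : ℕ, |y| ≤ m * r ^ n / n.factorial) : y = 0 := by
  have hlim : Tendsto (fun n : ℕ ↦ m * (r ^ n / n.factorial)) atTop (nhds 0) := by
    simpa using (FloorSemiring.tendsto_pow_div_factorial_atTop r).const_mul m
  exact abs_nonpos_iff.mp (ge_of_tendsto' hlim fun n ↦ (h n).trans_eq (mul_div_assoc _ _ _))

theorem hasSum_mul_pow_div_factorial (m r : ℝ) :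
    HasSum (fun n ↦ m * r ^ n / n.factorial) (m * Real.exp r) := by
  rw [Real.exp_eq_exp_ℝ, NormedSpace.exp_eq_tsum_div]
  simpa only [mul_div_assoc] using (Real.summable_pow_div_factorial r).hasSum.mul_left m

theorem eLpNorm_le_of_ae_abs_le_integral {α : Type*} [MeasurableSpace α] {μ : Measure α}
    [IsFiniteMeasure μ] {p : ℝ≥0∞} (hp : 1 ≤ p) {Z w : α → ℝ} (hZ : MemLp Z p μ) {c : ℝ}
    (hc : 0 ≤ c) (hw : ∀ᵐ x ∂μ, |w x| ≤ c * ∫ τ, |Z τ| ∂μ) :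
    eLpNorm w p μ ≤ ENNReal.ofReal (c * μ.real univ) * eLpNorm Z p μ := by
  have hp₀ : 0 ≤ p.toReal⁻¹ := inv_nonneg.mpr ENNReal.toReal_nonneg
  have hp₁ : 0 ≤ 1 - 1 / p.toReal := by
    rcases eq_or_ne p ⊤ with rfl | hp_top
    · simp
    · have : 1 ≤ p.toReal := by simpa using ENNReal.toReal_mono hp_top hp
      rw [sub_nonneg, div_le_one (by positivity)]
      exact this
  have hZ₁ : ENNReal.ofReal (∫ τ, |Z τ| ∂μ) ≤ eLpNorm Z p μ * μ univ ^ (1 - 1 / p.toReal) := by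
    have := ofReal_integral_norm_eq_lintegral_enorm (hZ.integrable hp)
    simp only [Real.norm_eq_abs] at this
    rw [this, ← eLpNorm_one_eq_lintegral_enorm]
    simpa using eLpNorm_le_eLpNorm_mul_rpow_measure_univ hp hZ.1
  calc eLpNorm w p μ ≤ μ univ ^ p.toReal⁻¹ * ENNReal.ofReal (c * ∫ τ, |Z τ| ∂μ) :=
        eLpNorm_le_of_ae_bound (by simpa only [Real.norm_eq_abs] using hw)
    _ ≤ μ univ ^ p.toReal⁻¹ * (ENNReal.ofReal c *
          (eLpNorm Z p μ * μ univ ^ (1 - 1 / p.toReal))) := by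
        rw [ENNReal.ofReal_mul hc]
        gcongr
    _ = ENNReal.ofReal (c * μ.real univ) * eLpNorm Z p μ := by
        have hV : μ univ ^ p.toReal⁻¹ * μ univ ^ (1 - 1 / p.toReal) = μ univ := by
          rw [← ENNReal.rpow_add_of_nonneg _ _ hp₀ hp₁, inv_eq_one_div, add_sub_cancel,
            ENNReal.rpow_one]
        rw [ENNReal.ofReal_mul hc, measureReal_def, ENNReal.ofReal_toReal (measure_ne_top μ univ)]
        conv_rhs => rw [← hV]
        ring

instance isFiniteMeasure_restrict_volterraBox (h₁ h₂ h₃ h₄ : ℝ) :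
    IsFiniteMeasure (volume.restrict (volterraBox h₁ h₂ h₃ h₄)) :=
  isFiniteMeasure_restrict.mpr <| ((Metric.isBounded_Ioo 0 h₁).prod <|
    (Metric.isBounded_Ioo 0 h₂).prod <|
      (Metric.isBounded_Ioo 0 h₃).prod (Metric.isBounded_Ioo 0 h₄)).measure_lt_top.ne

theorem measurableSet_volterraBox (h₁ h₂ h₃ h₄ : ℝ) : MeasurableSet (volterraBox h₁ h₂ h₃ h₄) :=
  measurableSet_Ioo.prod <| measurableSet_Ioo.prod <| measurableSet_Ioo.prod measurableSet_Ioo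

def volterraRegion (x : ℝ⁴) : Set ℝ⁴ :=
  Ioc 0 x.1 ×ˢ Ioc 0 x.2.1 ×ˢ Ioc 0 x.2.2.1 ×ˢ Ioc 0 x.2.2.2

noncomputable def volterraOp (K : ℝ⁴ × ℝ⁴ → ℝ) (f : ℝ⁴ → ℝ) (x : ℝ⁴) : ℝ :=
  ∫ τ in volterraRegion x, K (x, τ) * f τ

theorem measurableSet_volterraRegion (x : ℝ⁴) : MeasurableSet (volterraRegion x) :=
  measurableSet_Ioc.prod <| measurableSet_Ioc.prod <| measurableSet_Ioc.prod measurableSet_Ioc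

theorem measurableSet_setOf_mem_volterraRegion :
    MeasurableSet {z : ℝ⁴ × ℝ⁴ | z.2 ∈ volterraRegion z.1} := by
  simp only [volterraRegion, mem_prod, mem_Ioc, ofPred_and]
  refine .inter (.inter ?_ ?_) (.inter (.inter ?_ ?_) (.inter (.inter ?_ ?_) (.inter ?_ ?_))) <;>
    first
    | exact measurableSet_lt (by fun_prop) (by fun_prop)
    | exact measurableSet_le (by fun_prop) (by fun_prop)

section VolterraOperator

variable {h₁ h₂ h₃ h₄ C : ℝ} {K : ℝ⁴ × ℝ⁴ → ℝ} {x : ℝ⁴} {f g : ℝ⁴ → ℝ}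

theorem pos_of_mem_volterraBox (hx : x ∈ volterraBox h₁ h₂ h₃ h₄) :
    0 < h₁ ∧ 0 < h₂ ∧ 0 < h₃ ∧ 0 < h₄ :=
  ⟨hx.1.1.trans hx.1.2, hx.2.1.1.trans hx.2.1.2, hx.2.2.1.1.trans hx.2.2.1.2,
    hx.2.2.2.1.trans hx.2.2.2.2⟩

theorem volterraRegion_subset_volterraBox (hx : x ∈ volterraBox h₁ h₂ h₃ h₄) :
    volterraRegion x ⊆ volterraBox h₁ h₂ h₃ h₄ := by
  obtain ⟨⟨-, hx₁⟩, ⟨-, hx₂⟩, ⟨-, hx₃⟩, ⟨-, hx₄⟩⟩ := hx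
  rintro τ ⟨⟨hτ₁, hτx₁⟩, ⟨hτ₂, hτx₂⟩, ⟨hτ₃, hτx₃⟩, ⟨hτ₄, hτx₄⟩⟩
  exact ⟨⟨hτ₁, hτx₁.trans_lt hx₁⟩, ⟨hτ₂, hτx₂.trans_lt hx₂⟩, ⟨hτ₃, hτx₃.trans_lt hx₃⟩,
    ⟨hτ₄, hτx₄.trans_lt hx₄⟩⟩

theorem volterraRegion_subset_Ioc_prod (hx : x ∈ volterraBox h₁ h₂ h₃ h₄) :
    volterraRegion x ⊆ Ioc 0 x.1 ×ˢ (Ioc 0 h₂ ×ˢ Ioc 0 h₃ ×ˢ Ioc 0 h₄) := by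
  obtain ⟨-, ⟨-, hx₂⟩, ⟨-, hx₃⟩, ⟨-, hx₄⟩⟩ := hx
  rintro τ ⟨hτ₁, ⟨hτ₂, hτx₂⟩, ⟨hτ₃, hτx₃⟩, ⟨hτ₄, hτx₄⟩⟩
  exact ⟨hτ₁, ⟨hτ₂, hτx₂.trans hx₂.le⟩, ⟨hτ₃, hτx₃.trans hx₃.le⟩, ⟨hτ₄, hτx₄.trans hx₄.le⟩⟩

theorem stronglyMeasurable_volterraOp (hK : Measurable K) (hf : Measurable f) :
    StronglyMeasurable (volterraOp K f) := by
  have : volterraOp K f = fun x ↦ ∫ τ,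
      {z : ℝ⁴ × ℝ⁴ | z.2 ∈ volterraRegion z.1}.indicator (fun z ↦ K z * f z.2) (x, τ) := by
    ext x
    rw [volterraOp, ← integral_indicator (measurableSet_volterraRegion x)]
    rfl
  rw [this]
  exact ((hK.mul (hf.comp measurable_snd)).indicator
    measurableSet_setOf_mem_volterraRegion).stronglyMeasurable.integral_prod_right'

theorem volterraOp_congr_ae
    (hfg : f =ᵐ[volume.restrict (volterraBox h₁ h₂ h₃ h₄)] g) :
    volterraOp K f =ᵐ[volume.restrict (volterraBox h₁ h₂ h₃ h₄)] volterraOp K g := by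
  filter_upwards [ae_restrict_mem (measurableSet_volterraBox h₁ h₂ h₃ h₄)] with x hx
  refine setIntegral_congr_ae (measurableSet_volterraRegion x) ?_
  filter_upwards [(ae_restrict_iff' (measurableSet_volterraBox h₁ h₂ h₃ h₄)).mp hfg] with τ hτ hτx
  rw [hτ (volterraRegion_subset_volterraBox hx hτx)]

theorem aestronglyMeasurable_volterraOp (hK : Measurable K)
    (hf : AEStronglyMeasurable f (volume.restrict (volterraBox h₁ h₂ h₃ h₄))) :
    AEStronglyMeasurable (volterraOp K f) (volume.restrict (volterraBox h₁ h₂ h₃ h₄)) :=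
  ⟨_, stronglyMeasurable_volterraOp hK hf.stronglyMeasurable_mk.measurable,
    volterraOp_congr_ae hf.ae_eq_mk⟩

theorem integrableOn_kernel_mul (hK : Measurable K)
    (hKx : ∀ᵐ τ ∂volume.restrict (volterraBox h₁ h₂ h₃ h₄), |K (x, τ)| ≤ C)
    (hf : IntegrableOn f (volterraBox h₁ h₂ h₃ h₄)) :
    IntegrableOn (fun τ ↦ K (x, τ) * f τ) (volterraBox h₁ h₂ h₃ h₄) :=
  hf.bdd_mul (hK.comp measurable_prodMk_left).aestronglyMeasurable hKx

theorem integral_abs_kernel_mul_le (hK : Measurable K)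
    (hx : x ∈ volterraBox h₁ h₂ h₃ h₄)
    (hKx : ∀ᵐ τ ∂volume.restrict (volterraBox h₁ h₂ h₃ h₄), |K (x, τ)| ≤ C)
    (hf : IntegrableOn f (volterraBox h₁ h₂ h₃ h₄)) :
    ∫ τ in volterraRegion x, |K (x, τ) * f τ| ≤ C * ∫ τ in volterraBox h₁ h₂ h₃ h₄, |f τ| := by
  calc ∫ τ in volterraRegion x, |K (x, τ) * f τ|
      ≤ ∫ τ in volterraBox h₁ h₂ h₃ h₄, |K (x, τ) * f τ| :=
        setIntegral_mono_set (integrableOn_kernel_mul hK hKx hf).abs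
          (.of_forall fun _ ↦ abs_nonneg _) (volterraRegion_subset_volterraBox hx).eventuallyLE
    _ ≤ ∫ τ in volterraBox h₁ h₂ h₃ h₄, C * |f τ| := by
        refine integral_mono_ae (integrableOn_kernel_mul hK hKx hf).abs (hf.abs.const_mul C) ?_
        filter_upwards [hKx] with τ hτ
        rw [abs_mul]
        exact mul_le_mul_of_nonneg_right hτ (abs_nonneg _)
    _ = C * ∫ τ in volterraBox h₁ h₂ h₃ h₄, |f τ| := integral_const_mul C _

theorem abs_volterraOp_le (hK : Measurable K) (hx : x ∈ volterraBox h₁ h₂ h₃ h₄)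
    (hKx : ∀ᵐ τ ∂volume.restrict (volterraBox h₁ h₂ h₃ h₄), |K (x, τ)| ≤ C)
    (hf : IntegrableOn f (volterraBox h₁ h₂ h₃ h₄)) :
    |volterraOp K f x| ≤ C * ∫ τ in volterraBox h₁ h₂ h₃ h₄, |f τ| :=
  abs_integral_le_integral_abs.trans (integral_abs_kernel_mul_le hK hx hKx hf)

theorem volterraOp_add (hK : Measurable K) (hx : x ∈ volterraBox h₁ h₂ h₃ h₄)
    (hKx : ∀ᵐ τ ∂volume.restrict (volterraBox h₁ h₂ h₃ h₄), |K (x, τ)| ≤ C)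
    (hf : IntegrableOn f (volterraBox h₁ h₂ h₃ h₄))
    (hg : IntegrableOn g (volterraBox h₁ h₂ h₃ h₄)) :
    volterraOp K (f + g) x = volterraOp K f x + volterraOp K g x := by
  have hR := volterraRegion_subset_volterraBox hx
  simp only [volterraOp, Pi.add_apply, mul_add]
  exact integral_add ((integrableOn_kernel_mul hK hKx hf).mono_set hR)
    ((integrableOn_kernel_mul hK hKx hg).mono_set hR)

theorem volterraOp_sub (hK : Measurable K) (hx : x ∈ volterraBox h₁ h₂ h₃ h₄)
    (hKx : ∀ᵐ τ ∂volume.restrict (volterraBox h₁ h₂ h₃ h₄), |K (x, τ)| ≤ C)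
    (hf : IntegrableOn f (volterraBox h₁ h₂ h₃ h₄))
    (hg : IntegrableOn g (volterraBox h₁ h₂ h₃ h₄)) :
    volterraOp K (f - g) x = volterraOp K f x - volterraOp K g x := by
  have hR := volterraRegion_subset_volterraBox hx
  simp only [volterraOp, Pi.sub_apply, mul_sub]
  exact integral_sub ((integrableOn_kernel_mul hK hKx hf).mono_set hR)
    ((integrableOn_kernel_mul hK hKx hg).mono_set hR)

theorem volterraOp_tsum (hK : Measurable K) (hx : x ∈ volterraBox h₁ h₂ h₃ h₄)
    (hKx : ∀ᵐ τ ∂volume.restrict (volterraBox h₁ h₂ h₃ h₄), |K (x, τ)| ≤ C)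
    {v : ℕ → ℝ⁴ → ℝ} (hv : ∀ n, IntegrableOn (v n) (volterraBox h₁ h₂ h₃ h₄))
    (hsum : Summable fun n ↦ ∫ τ in volterraBox h₁ h₂ h₃ h₄, |v n τ|) :
    volterraOp K (fun τ ↦ ∑' n, v n τ) x = ∑' n, volterraOp K (v n) x := by
  have hR := volterraRegion_subset_volterraBox hx
  simp only [volterraOp, ← tsum_mul_left]
  refine (integral_tsum_of_summable_integral_norm
    (fun n ↦ (integrableOn_kernel_mul hK hKx (hv n)).mono_set hR) ?_).symm
  refine (hsum.mul_left C).of_nonneg_of_le (fun n ↦ integral_nonneg fun _ ↦ norm_nonneg _)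
    fun n ↦ ?_
  exact integral_abs_kernel_mul_le hK hx hKx (hv n)

theorem abs_volterraOp_le_of_abs_le_pow (hC : 0 ≤ C) (hK : Measurable K)
    (hx : x ∈ volterraBox h₁ h₂ h₃ h₄)
    (hKx : ∀ᵐ τ ∂volume.restrict (volterraBox h₁ h₂ h₃ h₄), |K (x, τ)| ≤ C)
    (hf : IntegrableOn f (volterraBox h₁ h₂ h₃ h₄)) {a : ℝ} (ha : 0 ≤ a) {n : ℕ}
    (hfa : ∀ᵐ τ ∂volume.restrict (volterraBox h₁ h₂ h₃ h₄), |f τ| ≤ a * τ.1 ^ n) :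
    |volterraOp K f x| ≤ C * a * (h₂ * h₃ * h₄) * x.1 ^ (n + 1) / (n + 1) := by
  have hRG := volterraRegion_subset_volterraBox hx
  obtain ⟨-, hh₂, hh₃, hh₄⟩ := pos_of_mem_volterraBox hx
  set S := Ioc 0 x.1 ×ˢ (Ioc 0 h₂ ×ˢ Ioc 0 h₃ ×ˢ Ioc 0 h₄)
  have hRS : volterraRegion x ⊆ S := volterraRegion_subset_Ioc_prod hx
  have hS : IntegrableOn (fun τ : ℝ⁴ ↦ C * a * τ.1 ^ n) S :=
    (integrableOn_Ioc_prod_fst_pow _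
      (by simp [Measure.volume_eq_prod, ENNReal.mul_eq_top]) n).const_mul _
  calc |volterraOp K f x| ≤ ∫ τ in volterraRegion x, |K (x, τ) * f τ| :=
        abs_integral_le_integral_abs
    _ ≤ ∫ τ in volterraRegion x, C * a * τ.1 ^ n := by
        refine integral_mono_ae ?_ (hS.mono_set hRS) ?_
        · exact ((integrableOn_kernel_mul hK hKx hf).mono_set hRG).abs
        filter_upwards [ae_restrict_of_ae_restrict_of_subset hRG (hKx.and hfa)] with τ ⟨hKτ, hfτ⟩
        rw [abs_mul, mul_assoc]
        exact mul_le_mul hKτ hfτ (abs_nonneg _) hC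
    _ ≤ ∫ τ in S, C * a * τ.1 ^ n := by
        refine setIntegral_mono_set hS ?_ hRS.eventuallyLE
        filter_upwards [ae_restrict_mem (measurableSet_Ioc.prod (measurableSet_Ioc.prod
          (measurableSet_Ioc.prod measurableSet_Ioc)))] with τ hτ
        exact mul_nonneg (mul_nonneg hC ha) (pow_nonneg hτ.1.1.le n)
    _ = C * a * (h₂ * h₃ * h₄) * x.1 ^ (n + 1) / (n + 1) := by
        rw [integral_const_mul, setIntegral_Ioc_prod_fst_pow hx.1.1.le,
          volume_real_Ioc_prod_Ioc_prod_Ioc hh₂.le hh₃.le hh₄.le]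
        ring

theorem ae_iteratedIntegral_eq_volterraOp (hK : Measurable K)
    (hKbd : ∀ᵐ x ∂volume.restrict (volterraBox h₁ h₂ h₃ h₄),
      ∀ᵐ τ ∂volume.restrict (volterraBox h₁ h₂ h₃ h₄), |K (x, τ)| ≤ C)
    (hf : IntegrableOn f (volterraBox h₁ h₂ h₃ h₄)) :
    ∀ᵐ x ∂volume.restrict (volterraBox h₁ h₂ h₃ h₄),
      (∫ τ₁ in (0:ℝ)..x.1, ∫ τ₂ in (0:ℝ)..x.2.1, ∫ τ₃ in (0:ℝ)..x.2.2.1, ∫ τ₄ in (0:ℝ)..x.2.2.2,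
        K (x, (τ₁, τ₂, τ₃, τ₄)) * f (τ₁, τ₂, τ₃, τ₄)) = volterraOp K f x := by
  filter_upwards [ae_restrict_mem (measurableSet_volterraBox h₁ h₂ h₃ h₄), hKbd] with x hx hKx
  exact (setIntegral_Ioc_prod4_eq_intervalIntegral hx.1.1.le hx.2.1.1.le hx.2.2.1.1.le
    hx.2.2.2.1.le ((integrableOn_kernel_mul hK hKx hf).mono_set
      (volterraRegion_subset_volterraBox hx))).symm

theorem integrable_volterraOp (hK : Measurable K)
    (hKbd : ∀ᵐ x ∂volume.restrict (volterraBox h₁ h₂ h₃ h₄),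
      ∀ᵐ τ ∂volume.restrict (volterraBox h₁ h₂ h₃ h₄), |K (x, τ)| ≤ C)
    (hf : IntegrableOn f (volterraBox h₁ h₂ h₃ h₄)) :
    IntegrableOn (volterraOp K f) (volterraBox h₁ h₂ h₃ h₄) := by
  refine Integrable.of_bound (aestronglyMeasurable_volterraOp hK hf.1)
    (C * ∫ τ in volterraBox h₁ h₂ h₃ h₄, |f τ|) ?_
  filter_upwards [ae_restrict_mem (measurableSet_volterraBox h₁ h₂ h₃ h₄), hKbd] with x hx hKx
  exact abs_volterraOp_le hK hx hKx hf

theorem ae_abs_le_of_abs_le_abs_volterraOp (hC : 0 ≤ C) (hK : Measurable K)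
    (hKbd : ∀ᵐ x ∂volume.restrict (volterraBox h₁ h₂ h₃ h₄),
      ∀ᵐ τ ∂volume.restrict (volterraBox h₁ h₂ h₃ h₄), |K (x, τ)| ≤ C)
    {u : ℕ → ℝ⁴ → ℝ} (hu : ∀ n, IntegrableOn (u n) (volterraBox h₁ h₂ h₃ h₄)) {m : ℝ} (hm : 0 ≤ m)
    (h₀ : ∀ᵐ x ∂volume.restrict (volterraBox h₁ h₂ h₃ h₄), |u 0 x| ≤ m)
    (hsucc : ∀ n, ∀ᵐ x ∂volume.restrict (volterraBox h₁ h₂ h₃ h₄),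
      |u (n + 1) x| ≤ |volterraOp K (u n) x|) (n : ℕ) :
    ∀ᵐ x ∂volume.restrict (volterraBox h₁ h₂ h₃ h₄),
      |u n x| ≤ m * (C * (h₁ * h₂ * h₃ * h₄)) ^ n / n.factorial := by
  have hG := measurableSet_volterraBox h₁ h₂ h₃ h₄
  have key : ∀ n, ∀ᵐ x ∂volume.restrict (volterraBox h₁ h₂ h₃ h₄),
      |u n x| ≤ m * (C * (h₂ * h₃ * h₄)) ^ n / n.factorial * x.1 ^ n := by
    intro n
    induction n with
    | zero => simpa using h₀
    | succ n ih =>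
      filter_upwards [ae_restrict_mem hG, hKbd, hsucc n] with x hx hKx hux
      obtain ⟨-, hh₂, hh₃, hh₄⟩ := pos_of_mem_volterraBox hx
      refine hux.trans <| (abs_volterraOp_le_of_abs_le_pow hC hK hx hKx (hu n)
        (by positivity) ih).trans_eq ?_
      rw [Nat.factorial_succ]
      push_cast
      field_simp
      ring
  filter_upwards [ae_restrict_mem hG, key n] with x hx hux
  obtain ⟨-, hh₂, hh₃, hh₄⟩ := pos_of_mem_volterraBox hx
  calc |u n x| ≤ m * (C * (h₂ * h₃ * h₄)) ^ n / n.factorial * x.1 ^ n := hux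
    _ ≤ m * (C * (h₂ * h₃ * h₄)) ^ n / n.factorial * h₁ ^ n := by
        gcongr
        exacts [hx.1.1.le, hx.1.2.le]
    _ = m * (C * (h₁ * h₂ * h₃ * h₄)) ^ n / n.factorial := by ring

theorem ae_eq_of_add_volterraOp_eq (hC : 0 ≤ C) (hK : Measurable K)
    (hKbd : ∀ᵐ x ∂volume.restrict (volterraBox h₁ h₂ h₃ h₄),
      ∀ᵐ τ ∂volume.restrict (volterraBox h₁ h₂ h₃ h₄), |K (x, τ)| ≤ C)
    {b b' Z : ℝ⁴ → ℝ} (hb : IntegrableOn b (volterraBox h₁ h₂ h₃ h₄))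
    (hb' : IntegrableOn b' (volterraBox h₁ h₂ h₃ h₄))
    (hbZ : ∀ᵐ x ∂volume.restrict (volterraBox h₁ h₂ h₃ h₄), b x + volterraOp K b x = Z x)
    (hb'Z : ∀ᵐ x ∂volume.restrict (volterraBox h₁ h₂ h₃ h₄), b' x + volterraOp K b' x = Z x) :
    b' =ᵐ[volume.restrict (volterraBox h₁ h₂ h₃ h₄)] b := by
  set d := b' - b
  have hd : ∀ᵐ x ∂volume.restrict (volterraBox h₁ h₂ h₃ h₄), |d x| = |volterraOp K d x| := by
    filter_upwards [ae_restrict_mem (measurableSet_volterraBox h₁ h₂ h₃ h₄), hKbd, hbZ, hb'Z]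
      with x hx hKx hbx hb'x
    rw [volterraOp_sub hK hx hKx hb' hb, ← abs_neg]
    congr 1
    simp only [d, Pi.sub_apply]
    linarith
  have hd₀ : ∀ᵐ x ∂volume.restrict (volterraBox h₁ h₂ h₃ h₄),
      |d x| ≤ C * ∫ τ in volterraBox h₁ h₂ h₃ h₄, |d τ| := by
    filter_upwards [ae_restrict_mem (measurableSet_volterraBox h₁ h₂ h₃ h₄), hKbd, hd]
      with x hx hKx hdx
    exact hdx.trans_le (abs_volterraOp_le hK hx hKx (hb'.sub hb))
  have hbound := ae_all_iff.mpr <| ae_abs_le_of_abs_le_abs_volterraOp (u := fun _ ↦ d) hC hK hKbd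
    (fun _ ↦ hb'.sub hb) (mul_nonneg hC (integral_nonneg fun _ ↦ abs_nonneg _)) hd₀
    (fun _ ↦ hd.mono fun _ ↦ le_of_eq)
  filter_upwards [hbound] with x hx
  exact sub_eq_zero.mp (eq_zero_of_abs_le_pow_div_factorial hx)

noncomputable def neumannTerm (K : ℝ⁴ × ℝ⁴ → ℝ) (Z : ℝ⁴ → ℝ) (n : ℕ) : ℝ⁴ → ℝ :=
  (fun f ↦ -volterraOp K f)^[n + 1] Z

theorem neumannTerm_zero (Z : ℝ⁴ → ℝ) : neumannTerm K Z 0 = -volterraOp K Z := rfl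

theorem neumannTerm_succ (Z : ℝ⁴ → ℝ) (n : ℕ) :
    neumannTerm K Z (n + 1) = -volterraOp K (neumannTerm K Z n) :=
  Function.iterate_succ_apply' _ _ _

theorem integrableOn_neumannTerm (hK : Measurable K)
    (hKbd : ∀ᵐ x ∂volume.restrict (volterraBox h₁ h₂ h₃ h₄),
      ∀ᵐ τ ∂volume.restrict (volterraBox h₁ h₂ h₃ h₄), |K (x, τ)| ≤ C)
    {Z : ℝ⁴ → ℝ} (hZ : IntegrableOn Z (volterraBox h₁ h₂ h₃ h₄)) (n : ℕ) :
    IntegrableOn (neumannTerm K Z n) (volterraBox h₁ h₂ h₃ h₄) := by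
  induction n with
  | zero => exact (integrable_volterraOp hK hKbd hZ).neg
  | succ n ih => rw [neumannTerm_succ]; exact (integrable_volterraOp hK hKbd ih).neg

theorem ae_abs_neumannTerm_le (hC : 0 ≤ C) (hK : Measurable K)
    (hKbd : ∀ᵐ x ∂volume.restrict (volterraBox h₁ h₂ h₃ h₄),
      ∀ᵐ τ ∂volume.restrict (volterraBox h₁ h₂ h₃ h₄), |K (x, τ)| ≤ C)
    {Z : ℝ⁴ → ℝ} (hZ : IntegrableOn Z (volterraBox h₁ h₂ h₃ h₄)) :
    ∀ᵐ x ∂volume.restrict (volterraBox h₁ h₂ h₃ h₄), ∀ n, |neumannTerm K Z n x| ≤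
      (C * ∫ τ in volterraBox h₁ h₂ h₃ h₄, |Z τ|) * (C * (h₁ * h₂ * h₃ * h₄)) ^ n /
        n.factorial := by
  refine ae_all_iff.mpr <| ae_abs_le_of_abs_le_abs_volterraOp hC hK hKbd
    (integrableOn_neumannTerm hK hKbd hZ) (mul_nonneg hC (integral_nonneg fun _ ↦ abs_nonneg _))
    ?_ fun n ↦ .of_forall fun x ↦ by rw [neumannTerm_succ, Pi.neg_apply, abs_neg]
  filter_upwards [ae_restrict_mem (measurableSet_volterraBox h₁ h₂ h₃ h₄), hKbd] with x hx hKx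
  exact (abs_neg _).trans_le (abs_volterraOp_le hK hx hKx hZ)

theorem summable_integral_abs_neumannTerm (hC : 0 ≤ C) (hK : Measurable K)
    (hKbd : ∀ᵐ x ∂volume.restrict (volterraBox h₁ h₂ h₃ h₄),
      ∀ᵐ τ ∂volume.restrict (volterraBox h₁ h₂ h₃ h₄), |K (x, τ)| ≤ C)
    {Z : ℝ⁴ → ℝ} (hZ : IntegrableOn Z (volterraBox h₁ h₂ h₃ h₄)) :
    Summable fun n ↦ ∫ τ in volterraBox h₁ h₂ h₃ h₄, |neumannTerm K Z n τ| := by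
  refine ((hasSum_mul_pow_div_factorial (C * ∫ τ in volterraBox h₁ h₂ h₃ h₄, |Z τ|)
    (C * (h₁ * h₂ * h₃ * h₄))).summable.mul_right
    ((volume.restrict (volterraBox h₁ h₂ h₃ h₄)).real univ)).of_nonneg_of_le
    (fun n ↦ integral_nonneg fun _ ↦ abs_nonneg _) fun n ↦ (le_abs_self _).trans ?_
  exact norm_integral_le_of_norm_le_const (f := fun τ ↦ |neumannTerm K Z n τ|)
    ((ae_abs_neumannTerm_le hC hK hKbd hZ).mono fun x hx ↦ by
      simpa only [Real.norm_eq_abs, abs_abs] using hx n)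

theorem exists_add_volterraOp_eq (hC : 0 ≤ C) (hK : Measurable K)
    (hKbd : ∀ᵐ x ∂volume.restrict (volterraBox h₁ h₂ h₃ h₄),
      ∀ᵐ τ ∂volume.restrict (volterraBox h₁ h₂ h₃ h₄), |K (x, τ)| ≤ C)
    {Z : ℝ⁴ → ℝ} (hZ : IntegrableOn Z (volterraBox h₁ h₂ h₃ h₄)) :
    ∃ b : ℝ⁴ → ℝ, AEStronglyMeasurable b (volume.restrict (volterraBox h₁ h₂ h₃ h₄)) ∧
      (∀ᵐ x ∂volume.restrict (volterraBox h₁ h₂ h₃ h₄), |b x - Z x| ≤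
        C * Real.exp (C * (h₁ * h₂ * h₃ * h₄)) * ∫ τ in volterraBox h₁ h₂ h₃ h₄, |Z τ|) ∧
      ∀ᵐ x ∂volume.restrict (volterraBox h₁ h₂ h₃ h₄), b x + volterraOp K b x = Z x := by
  have hv_int := integrableOn_neumannTerm hK hKbd hZ
  have hv_le := ae_abs_neumannTerm_le hC hK hKbd hZ
  have hexp := hasSum_mul_pow_div_factorial (C * ∫ τ in volterraBox h₁ h₂ h₃ h₄, |Z τ|)
    (C * (h₁ * h₂ * h₃ * h₄))
  have hv_sum : ∀ᵐ x ∂volume.restrict (volterraBox h₁ h₂ h₃ h₄),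
      Summable fun n ↦ neumannTerm K Z n x :=
    hv_le.mono fun x hx ↦ .of_norm_bounded hexp.summable hx
  set w : ℝ⁴ → ℝ := fun x ↦ ∑' n, neumannTerm K Z n x
  have hw_le : ∀ᵐ x ∂volume.restrict (volterraBox h₁ h₂ h₃ h₄), |w x| ≤
      (C * ∫ τ in volterraBox h₁ h₂ h₃ h₄, |Z τ|) * Real.exp (C * (h₁ * h₂ * h₃ * h₄)) :=
    hv_le.mono fun x hx ↦ (Real.norm_eq_abs _).symm.trans_le (tsum_of_norm_bounded hexp hx)
  have hw_meas : AEStronglyMeasurable w (volume.restrict (volterraBox h₁ h₂ h₃ h₄)) :=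
    aestronglyMeasurable_of_tendsto_ae atTop (f := fun N ↦ ∑ n ∈ Finset.range N, neumannTerm K Z n)
      (fun N ↦ Finset.aestronglyMeasurable_sum _ fun n _ ↦ (hv_int n).1)
      (hv_sum.mono fun x hx ↦ by simpa only [Finset.sum_apply] using hx.hasSum.tendsto_sum_nat)
  have hw_int : IntegrableOn w (volterraBox h₁ h₂ h₃ h₄) := Integrable.of_bound hw_meas _ hw_le
  refine ⟨Z + w, hZ.1.add hw_meas, ?_, ?_⟩
  · filter_upwards [hw_le] with x hx
    simpa [mul_right_comm C] using hx
  · filter_upwards [ae_restrict_mem (measurableSet_volterraBox h₁ h₂ h₃ h₄), hKbd, hv_sum]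
      with x hx hKx hsum
    have hTv (n : ℕ) : volterraOp K (neumannTerm K Z n) x = -neumannTerm K Z (n + 1) x := by
      rw [neumannTerm_succ, Pi.neg_apply, neg_neg]
    rw [Pi.add_apply, volterraOp_add hK hx hKx hZ hw_int,
      volterraOp_tsum hK hx hKx hv_int (summable_integral_abs_neumannTerm hC hK hKbd hZ),
      tsum_congr hTv, tsum_neg, show w x = _ from hsum.tsum_eq_zero_add, neumannTerm_zero]
    simp only [Pi.neg_apply]
    ring

end VolterraOperator

theorem volterra_integral_equation_unique_solvable_general
    (h₁ h₂ h₃ h₄ : ℝ)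
    (p : ℝ≥0∞) (hp : 1 ≤ p)
    (C : ℝ) (hC : 0 ≤ C)
    (K : (ℝ × ℝ × ℝ × ℝ) × (ℝ × ℝ × ℝ × ℝ) → ℝ)
    (hKmeas : Measurable K)
    (hKbd : ∀ᵐ z ∂((volume.restrict (volterraBox h₁ h₂ h₃ h₄)).prod
        (volume.restrict (volterraBox h₁ h₂ h₃ h₄))), |K z| ≤ C) :
    ∃ M : ℝ, 0 ≤ M ∧
      ∀ Z : ℝ × ℝ × ℝ × ℝ → ℝ,
        MemLp Z p (volume.restrict (volterraBox h₁ h₂ h₃ h₄)) →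
        ∃ b : ℝ × ℝ × ℝ × ℝ → ℝ,
          MemLp b p (volume.restrict (volterraBox h₁ h₂ h₃ h₄)) ∧
          (∀ᵐ x ∂(volume.restrict (volterraBox h₁ h₂ h₃ h₄)),
            b x + (∫ τ₁ in (0:ℝ)..x.1, ∫ τ₂ in (0:ℝ)..x.2.1, ∫ τ₃ in (0:ℝ)..x.2.2.1,
              ∫ τ₄ in (0:ℝ)..x.2.2.2,
                K (x, (τ₁, τ₂, τ₃, τ₄)) * b (τ₁, τ₂, τ₃, τ₄)) = Z x) ∧
          eLpNorm b p (volume.restrict (volterraBox h₁ h₂ h₃ h₄)) ≤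
            ENNReal.ofReal M * eLpNorm Z p (volume.restrict (volterraBox h₁ h₂ h₃ h₄)) ∧
          (∀ b' : ℝ × ℝ × ℝ × ℝ → ℝ,
            MemLp b' p (volume.restrict (volterraBox h₁ h₂ h₃ h₄)) →
            (∀ᵐ x ∂(volume.restrict (volterraBox h₁ h₂ h₃ h₄)),
              b' x + (∫ τ₁ in (0:ℝ)..x.1, ∫ τ₂ in (0:ℝ)..x.2.1, ∫ τ₃ in (0:ℝ)..x.2.2.1,
                ∫ τ₄ in (0:ℝ)..x.2.2.2,
                  K (x, (τ₁, τ₂, τ₃, τ₄)) * b' (τ₁, τ₂, τ₃, τ₄)) = Z x) →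
            b' =ᵐ[volume.restrict (volterraBox h₁ h₂ h₃ h₄)] b) := by
  set μ := volume.restrict (volterraBox h₁ h₂ h₃ h₄)
  have hKx := Measure.ae_ae_of_ae_prod hKbd
  set c := C * Real.exp (C * (h₁ * h₂ * h₃ * h₄)) * μ.real univ
  refine ⟨1 + c, by positivity, fun Z hZ ↦ ?_⟩
  obtain ⟨b, hb_meas, hbZ, hb⟩ := exists_add_volterraOp_eq hC hKmeas hKx (hZ.integrable hp)
  have hbZ_norm : eLpNorm (b - Z) p μ ≤ ENNReal.ofReal c * eLpNorm Z p μ :=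
    eLpNorm_le_of_ae_abs_le_integral hp hZ (by positivity) hbZ
  have hb_mem : MemLp b p μ := by
    simpa using hZ.add (MemLp.of_bound (hb_meas.sub hZ.1) _ hbZ)
  refine ⟨b, hb_mem, ?_, ?_, fun b' hb' hb'Z ↦ ?_⟩
  · filter_upwards [ae_iteratedIntegral_eq_volterraOp hKmeas hKx (hb_mem.integrable hp), hb]
      with x hx hbx
    rwa [hx]
  · calc eLpNorm b p μ = eLpNorm (Z + (b - Z)) p μ := by rw [add_sub_cancel]
      _ ≤ eLpNorm Z p μ + eLpNorm (b - Z) p μ := eLpNorm_add_le hZ.1 (hb_meas.sub hZ.1) hp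
      _ ≤ eLpNorm Z p μ + ENNReal.ofReal c * eLpNorm Z p μ := by gcongr
      _ = ENNReal.ofReal (1 + c) * eLpNorm Z p μ := by
        rw [ENNReal.ofReal_add zero_le_one (by positivity), ENNReal.ofReal_one, add_mul, one_mul]
  · refine ae_eq_of_add_volterraOp_eq hC hKmeas hKx (hb_mem.integrable hp) (hb'.integrable hp) hb ?_
    filter_upwards [ae_iteratedIntegral_eq_volterraOp hKmeas hKx (hb'.integrable hp), hb'Z]
      with x hx hx'
    rwa [← hx]

/-- unique solvability in `L_p(G)` of the abstract Volterra integral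
equation `b(x) + ∫₀^{x₁}∫₀^{x₂}∫₀^{x₃}∫₀^{x₄} K(x,τ) b(τ) dτ = Z(x)` relative to the
point `(0,0,0,0)`, with an `L_p` a priori estimate with constant independent of `Z`. -/
theorem volterra_integral_equation_unique_solvable
    (h₁ h₂ h₃ h₄ : ℝ) (hh₁ : 0 < h₁) (hh₂ : 0 < h₂) (hh₃ : 0 < h₃) (hh₄ : 0 < h₄)
    (p : ℝ≥0∞) (hp : 1 ≤ p)
    (C : ℝ) (hC : 0 ≤ C)
    (K : (ℝ × ℝ × ℝ × ℝ) × (ℝ × ℝ × ℝ × ℝ) → ℝ)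
    (hKmeas : Measurable K)
    (hKbd : ∀ᵐ z ∂((volume.restrict (volterraBox h₁ h₂ h₃ h₄)).prod
        (volume.restrict (volterraBox h₁ h₂ h₃ h₄))), |K z| ≤ C) :
    ∃ M : ℝ, 0 ≤ M ∧
      ∀ Z : ℝ × ℝ × ℝ × ℝ → ℝ,
        MemLp Z p (volume.restrict (volterraBox h₁ h₂ h₃ h₄)) →
        ∃ b : ℝ × ℝ × ℝ × ℝ → ℝ,
          MemLp b p (volume.restrict (volterraBox h₁ h₂ h₃ h₄)) ∧
          (∀ᵐ x ∂(volume.restrict (volterraBox h₁ h₂ h₃ h₄)),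
            b x + (∫ τ₁ in (0:ℝ)..x.1, ∫ τ₂ in (0:ℝ)..x.2.1, ∫ τ₃ in (0:ℝ)..x.2.2.1,
              ∫ τ₄ in (0:ℝ)..x.2.2.2,
                K (x, (τ₁, τ₂, τ₃, τ₄)) * b (τ₁, τ₂, τ₃, τ₄)) = Z x) ∧
          eLpNorm b p (volume.restrict (volterraBox h₁ h₂ h₃ h₄)) ≤
            ENNReal.ofReal M * eLpNorm Z p (volume.restrict (volterraBox h₁ h₂ h₃ h₄)) ∧
          (∀ b' : ℝ × ℝ × ℝ × ℝ → ℝ,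
            MemLp b' p (volume.restrict (volterraBox h₁ h₂ h₃ h₄)) →
            (∀ᵐ x ∂(volume.restrict (volterraBox h₁ h₂ h₃ h₄)),
              b' x + (∫ τ₁ in (0:ℝ)..x.1, ∫ τ₂ in (0:ℝ)..x.2.1, ∫ τ₃ in (0:ℝ)..x.2.2.1,
                ∫ τ₄ in (0:ℝ)..x.2.2.2,
                  K (x, (τ₁, τ₂, τ₃, τ₄)) * b' (τ₁, τ₂, τ₃, τ₄)) = Z x) →
            b' =ᵐ[volume.restrict (volterraBox h₁ h₂ h₃ h₄)] b) :=
  volterra_integral_equation_unique_solvable_general h₁ h₂ h₃ h₄ p hp C hC K hKmeas hKbd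
end

section
/- For every (x₂, x₄) ∈ [0,h₂] × [0,h₄], the function x₃ ↦ F(x₂, x₃, x₄) has a (one-sided) derivative at x₃ = 0, and this derivative equals M₁(0, x₂, x₄); i.e. the compatibility condition F_{x₃}(x₂, 0, x₄) = Φ(0, x₂, x₄) holds, where Φ = M₁. -/
open MeasureTheory Set intervalIntegral

/-- The nonclassical Goursat data of problem (1),(4): the right-hand sides
`φ_{i₁,i₂,i₃,i₄}` of the boundary conditions (4).  Here the two `Fin 2` arguments
record the indices `i₃, i₄ ∈ {0,1}`, `φ002` stands for `φ_{0,0,2,i₄}`, `φ00d2` for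
`φ_{0,0,i₃,2}`, `φ102` for `φ_{1,0,2,i₄}`, `φ10d2` for `φ_{1,0,i₃,2}`, etc. -/
structure GoursatData where
  φ00 : Fin 2 → Fin 2 → ℝ
  φ10 : Fin 2 → Fin 2 → ℝ → ℝ
  φ01 : Fin 2 → Fin 2 → ℝ → ℝ
  φ002 : Fin 2 → ℝ → ℝ
  φ00d2 : Fin 2 → ℝ → ℝ
  φ11 : Fin 2 → Fin 2 → ℝ → ℝ → ℝ
  φ102 : Fin 2 → ℝ → ℝ → ℝ
  φ10d2 : Fin 2 → ℝ → ℝ → ℝ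
  φ012 : Fin 2 → ℝ → ℝ → ℝ
  φ01d2 : Fin 2 → ℝ → ℝ → ℝ
  φ0022 : ℝ → ℝ → ℝ
  φ112 : Fin 2 → ℝ → ℝ → ℝ → ℝ
  φ11d2 : Fin 2 → ℝ → ℝ → ℝ → ℝ
  φ0122 : ℝ → ℝ → ℝ → ℝ
  φ1022 : ℝ → ℝ → ℝ → ℝ

/-- Continuity of the Goursat data on the corresponding closed boxes. -/
def GoursatData.ContOn (d : GoursatData) (h₁ h₂ h₃ h₄ : ℝ) : Prop :=
  (∀ i₃ i₄, ContinuousOn (d.φ10 i₃ i₄) (Icc 0 h₁)) ∧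
  (∀ i₃ i₄, ContinuousOn (d.φ01 i₃ i₄) (Icc 0 h₂)) ∧
  (∀ i₄, ContinuousOn (d.φ002 i₄) (Icc 0 h₃)) ∧
  (∀ i₃, ContinuousOn (d.φ00d2 i₃) (Icc 0 h₄)) ∧
  (∀ i₃ i₄, ContinuousOn (fun q : ℝ × ℝ => d.φ11 i₃ i₄ q.1 q.2)
    (Icc 0 h₁ ×ˢ Icc 0 h₂)) ∧
  (∀ i₄, ContinuousOn (fun q : ℝ × ℝ => d.φ102 i₄ q.1 q.2) (Icc 0 h₁ ×ˢ Icc 0 h₃)) ∧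
  (∀ i₃, ContinuousOn (fun q : ℝ × ℝ => d.φ10d2 i₃ q.1 q.2) (Icc 0 h₁ ×ˢ Icc 0 h₄)) ∧
  (∀ i₄, ContinuousOn (fun q : ℝ × ℝ => d.φ012 i₄ q.1 q.2) (Icc 0 h₂ ×ˢ Icc 0 h₃)) ∧
  (∀ i₃, ContinuousOn (fun q : ℝ × ℝ => d.φ01d2 i₃ q.1 q.2) (Icc 0 h₂ ×ˢ Icc 0 h₄)) ∧
  ContinuousOn (fun q : ℝ × ℝ => d.φ0022 q.1 q.2) (Icc 0 h₃ ×ˢ Icc 0 h₄) ∧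
  (∀ i₄, ContinuousOn (fun q : ℝ × ℝ × ℝ => d.φ112 i₄ q.1 q.2.1 q.2.2)
    (Icc 0 h₁ ×ˢ Icc 0 h₂ ×ˢ Icc 0 h₃)) ∧
  (∀ i₃, ContinuousOn (fun q : ℝ × ℝ × ℝ => d.φ11d2 i₃ q.1 q.2.1 q.2.2)
    (Icc 0 h₁ ×ˢ Icc 0 h₂ ×ˢ Icc 0 h₄)) ∧
  ContinuousOn (fun q : ℝ × ℝ × ℝ => d.φ0122 q.1 q.2.1 q.2.2)
    (Icc 0 h₂ ×ˢ Icc 0 h₃ ×ˢ Icc 0 h₄) ∧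
  ContinuousOn (fun q : ℝ × ℝ × ℝ => d.φ1022 q.1 q.2.1 q.2.2)
    (Icc 0 h₁ ×ˢ Icc 0 h₃ ×ˢ Icc 0 h₄)

/-- The Goursat boundary value `F(x₂,x₃,x₄)` (the trace `u|_{x₁=0}`). -/
noncomputable def GoursatData.F (d : GoursatData) (x₂ x₃ x₄ : ℝ) : ℝ :=
  (∑ i₃ : Fin 2, ∑ i₄ : Fin 2, x₃ ^ (i₃ : ℕ) * x₄ ^ (i₄ : ℕ) * d.φ00 i₃ i₄)
  + (∑ i₃ : Fin 2, ∑ i₄ : Fin 2, x₃ ^ (i₃ : ℕ) * x₄ ^ (i₄ : ℕ) *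
      ∫ ξ₂ in (0:ℝ)..x₂, d.φ01 i₃ i₄ ξ₂)
  + (∑ i₄ : Fin 2, x₄ ^ (i₄ : ℕ) * ∫ ξ₃ in (0:ℝ)..x₃, (x₃ - ξ₃) * d.φ002 i₄ ξ₃)
  + (∑ i₃ : Fin 2, x₃ ^ (i₃ : ℕ) * ∫ ξ₄ in (0:ℝ)..x₄, (x₄ - ξ₄) * d.φ00d2 i₃ ξ₄)
  + (∑ i₄ : Fin 2, x₄ ^ (i₄ : ℕ) *
      ∫ ξ₂ in (0:ℝ)..x₂, ∫ ξ₃ in (0:ℝ)..x₃, (x₃ - ξ₃) * d.φ012 i₄ ξ₂ ξ₃)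
  + (∫ ξ₃ in (0:ℝ)..x₃, ∫ ξ₄ in (0:ℝ)..x₄, (x₃ - ξ₃) * (x₄ - ξ₄) * d.φ0022 ξ₃ ξ₄)
  + (∑ i₃ : Fin 2, x₃ ^ (i₃ : ℕ) *
      ∫ ξ₂ in (0:ℝ)..x₂, ∫ ξ₄ in (0:ℝ)..x₄, (x₄ - ξ₄) * d.φ01d2 i₃ ξ₂ ξ₄)
  + ∫ ξ₂ in (0:ℝ)..x₂, ∫ ξ₃ in (0:ℝ)..x₃, ∫ ξ₄ in (0:ℝ)..x₄,
      (x₃ - ξ₃) * (x₄ - ξ₄) * d.φ0122 ξ₂ ξ₃ ξ₄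

/-- The Goursat boundary value `g(x₁,x₃,x₄)` (the trace `u|_{x₂=0}`). -/
noncomputable def GoursatData.g (d : GoursatData) (x₁ x₃ x₄ : ℝ) : ℝ :=
  (∑ i₃ : Fin 2, ∑ i₄ : Fin 2, x₃ ^ (i₃ : ℕ) * x₄ ^ (i₄ : ℕ) * d.φ00 i₃ i₄)
  + (∑ i₃ : Fin 2, ∑ i₄ : Fin 2, x₃ ^ (i₃ : ℕ) * x₄ ^ (i₄ : ℕ) *
      ∫ ξ₁ in (0:ℝ)..x₁, d.φ10 i₃ i₄ ξ₁)
  + (∑ i₄ : Fin 2, x₄ ^ (i₄ : ℕ) * ∫ ξ₃ in (0:ℝ)..x₃, (x₃ - ξ₃) * d.φ002 i₄ ξ₃)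
  + (∑ i₃ : Fin 2, x₃ ^ (i₃ : ℕ) * ∫ ξ₄ in (0:ℝ)..x₄, (x₄ - ξ₄) * d.φ00d2 i₃ ξ₄)
  + (∑ i₄ : Fin 2, x₄ ^ (i₄ : ℕ) *
      ∫ ξ₁ in (0:ℝ)..x₁, ∫ ξ₃ in (0:ℝ)..x₃, (x₃ - ξ₃) * d.φ102 i₄ ξ₁ ξ₃)
  + (∫ ξ₃ in (0:ℝ)..x₃, ∫ ξ₄ in (0:ℝ)..x₄, (x₃ - ξ₃) * (x₄ - ξ₄) * d.φ0022 ξ₃ ξ₄)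
  + (∑ i₃ : Fin 2, x₃ ^ (i₃ : ℕ) *
      ∫ ξ₁ in (0:ℝ)..x₁, ∫ ξ₄ in (0:ℝ)..x₄, (x₄ - ξ₄) * d.φ10d2 i₃ ξ₁ ξ₄)
  + ∫ ξ₁ in (0:ℝ)..x₁, ∫ ξ₃ in (0:ℝ)..x₃, ∫ ξ₄ in (0:ℝ)..x₄,
      (x₃ - ξ₃) * (x₄ - ξ₄) * d.φ1022 ξ₁ ξ₃ ξ₄

/-- The function `M_k(x₁,x₂,x₄)` (`ψ` for `k = 0`, `Φ` for `k = 1`). -/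
noncomputable def GoursatData.M (d : GoursatData) (k : Fin 2) (x₁ x₂ x₄ : ℝ) : ℝ :=
  d.φ00 k 0 + x₄ * d.φ00 k 1
  + (∫ τ₁ in (0:ℝ)..x₁, d.φ10 k 0 τ₁) + x₄ * (∫ τ₁ in (0:ℝ)..x₁, d.φ10 k 1 τ₁)
  + (∫ τ₂ in (0:ℝ)..x₂, d.φ01 k 0 τ₂) + x₄ * (∫ τ₂ in (0:ℝ)..x₂, d.φ01 k 1 τ₂)
  + (∫ τ₄ in (0:ℝ)..x₄, (x₄ - τ₄) * d.φ00d2 k τ₄)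
  + (∫ τ₁ in (0:ℝ)..x₁, ∫ τ₂ in (0:ℝ)..x₂, d.φ11 k 0 τ₁ τ₂)
  + x₄ * (∫ τ₁ in (0:ℝ)..x₁, ∫ τ₂ in (0:ℝ)..x₂, d.φ11 k 1 τ₁ τ₂)
  + (∫ τ₂ in (0:ℝ)..x₂, ∫ τ₄ in (0:ℝ)..x₄, (x₄ - τ₄) * d.φ01d2 k τ₂ τ₄)
  + (∫ τ₁ in (0:ℝ)..x₁, ∫ τ₄ in (0:ℝ)..x₄, (x₄ - τ₄) * d.φ10d2 k τ₁ τ₄)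
  + ∫ τ₁ in (0:ℝ)..x₁, ∫ τ₂ in (0:ℝ)..x₂, ∫ τ₄ in (0:ℝ)..x₄,
      (x₄ - τ₄) * d.φ11d2 k τ₁ τ₂ τ₄

/-- The function `L_k(x₁,x₂,x₃)` (`T` for `k = 0`, `S` for `k = 1`). -/
noncomputable def GoursatData.L (d : GoursatData) (k : Fin 2) (x₁ x₂ x₃ : ℝ) : ℝ :=
  d.φ00 0 k + x₃ * d.φ00 1 k
  + (∫ η₁ in (0:ℝ)..x₁, d.φ10 0 k η₁) + x₃ * (∫ η₁ in (0:ℝ)..x₁, d.φ10 1 k η₁)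
  + (∫ η₂ in (0:ℝ)..x₂, d.φ01 0 k η₂) + x₃ * (∫ η₂ in (0:ℝ)..x₂, d.φ01 1 k η₂)
  + (∫ η₃ in (0:ℝ)..x₃, (x₃ - η₃) * d.φ002 k η₃)
  + (∫ η₁ in (0:ℝ)..x₁, ∫ η₂ in (0:ℝ)..x₂, d.φ11 0 k η₁ η₂)
  + x₃ * (∫ η₁ in (0:ℝ)..x₁, ∫ η₂ in (0:ℝ)..x₂, d.φ11 1 k η₁ η₂)
  + (∫ η₂ in (0:ℝ)..x₂, ∫ η₃ in (0:ℝ)..x₃, (x₃ - η₃) * d.φ012 k η₂ η₃)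
  + (∫ η₁ in (0:ℝ)..x₁, ∫ η₃ in (0:ℝ)..x₃, (x₃ - η₃) * d.φ102 k η₁ η₃)
  + ∫ η₁ in (0:ℝ)..x₁, ∫ η₂ in (0:ℝ)..x₂, ∫ η₃ in (0:ℝ)..x₃,
      (x₃ - η₃) * d.φ112 k η₁ η₂ η₃

/-- The function `g₀` of the integral representation: the part of a solution of
problem (1),(4) determined by the nonclassical Goursat data. -/
noncomputable def GoursatData.g0 (d : GoursatData) (x₁ x₂ x₃ x₄ : ℝ) : ℝ :=
  (∑ i₃ : Fin 2, ∑ i₄ : Fin 2, x₃ ^ (i₃ : ℕ) * x₄ ^ (i₄ : ℕ) * d.φ00 i₃ i₄)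
  + (∑ i₃ : Fin 2, ∑ i₄ : Fin 2, x₃ ^ (i₃ : ℕ) * x₄ ^ (i₄ : ℕ) *
      ∫ τ₁ in (0:ℝ)..x₁, d.φ10 i₃ i₄ τ₁)
  + (∑ i₃ : Fin 2, ∑ i₄ : Fin 2, x₃ ^ (i₃ : ℕ) * x₄ ^ (i₄ : ℕ) *
      ∫ τ₂ in (0:ℝ)..x₂, d.φ01 i₃ i₄ τ₂)
  + (∑ i₄ : Fin 2, x₄ ^ (i₄ : ℕ) * ∫ τ₃ in (0:ℝ)..x₃, (x₃ - τ₃) * d.φ002 i₄ τ₃)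
  + (∑ i₃ : Fin 2, x₃ ^ (i₃ : ℕ) * ∫ τ₄ in (0:ℝ)..x₄, (x₄ - τ₄) * d.φ00d2 i₃ τ₄)
  + (∑ i₃ : Fin 2, ∑ i₄ : Fin 2, x₃ ^ (i₃ : ℕ) * x₄ ^ (i₄ : ℕ) *
      ∫ τ₁ in (0:ℝ)..x₁, ∫ τ₂ in (0:ℝ)..x₂, d.φ11 i₃ i₄ τ₁ τ₂)
  + (∑ i₄ : Fin 2, x₄ ^ (i₄ : ℕ) *
      ∫ τ₁ in (0:ℝ)..x₁, ∫ τ₃ in (0:ℝ)..x₃, (x₃ - τ₃) * d.φ102 i₄ τ₁ τ₃)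
  + (∑ i₃ : Fin 2, x₃ ^ (i₃ : ℕ) *
      ∫ τ₁ in (0:ℝ)..x₁, ∫ τ₄ in (0:ℝ)..x₄, (x₄ - τ₄) * d.φ10d2 i₃ τ₁ τ₄)
  + (∑ i₄ : Fin 2, x₄ ^ (i₄ : ℕ) *
      ∫ τ₂ in (0:ℝ)..x₂, ∫ τ₃ in (0:ℝ)..x₃, (x₃ - τ₃) * d.φ012 i₄ τ₂ τ₃)
  + (∑ i₃ : Fin 2, x₃ ^ (i₃ : ℕ) *
      ∫ τ₂ in (0:ℝ)..x₂, ∫ τ₄ in (0:ℝ)..x₄, (x₄ - τ₄) * d.φ01d2 i₃ τ₂ τ₄)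
  + (∫ τ₃ in (0:ℝ)..x₃, ∫ τ₄ in (0:ℝ)..x₄, (x₃ - τ₃) * (x₄ - τ₄) * d.φ0022 τ₃ τ₄)
  + (∑ i₄ : Fin 2, x₄ ^ (i₄ : ℕ) *
      ∫ τ₁ in (0:ℝ)..x₁, ∫ τ₂ in (0:ℝ)..x₂, ∫ τ₃ in (0:ℝ)..x₃,
        (x₃ - τ₃) * d.φ112 i₄ τ₁ τ₂ τ₃)
  + (∑ i₃ : Fin 2, x₃ ^ (i₃ : ℕ) *
      ∫ τ₁ in (0:ℝ)..x₁, ∫ τ₂ in (0:ℝ)..x₂, ∫ τ₄ in (0:ℝ)..x₄,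
        (x₄ - τ₄) * d.φ11d2 i₃ τ₁ τ₂ τ₄)
  + (∫ τ₂ in (0:ℝ)..x₂, ∫ τ₃ in (0:ℝ)..x₃, ∫ τ₄ in (0:ℝ)..x₄,
      (x₃ - τ₃) * (x₄ - τ₄) * d.φ0122 τ₂ τ₃ τ₄)
  + ∫ τ₁ in (0:ℝ)..x₁, ∫ τ₃ in (0:ℝ)..x₃, ∫ τ₄ in (0:ℝ)..x₄,
      (x₃ - τ₃) * (x₄ - τ₄) * d.φ1022 τ₁ τ₃ τ₄


open Asymptotics Filter Topology

/-!
Write `F(x₂, x₃, x₄) = ψ(0, x₂, x₄) + x₃ Φ(0, x₂, x₄) + R(x₃)`: the terms of `F` that are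
constant or linear in `x₃` assemble exactly into `ψ + x₃ Φ`, and every other term carries a
kernel `x₃ - ξ₃` integrated over `ξ₃ ∈ [0, x₃]`. Bounding the integrands by compactness makes
`R(x₃) = O(x₃²)` uniformly, so `R` has one-sided derivative `0` at `x₃ = 0`.
-/

theorem hasDerivWithinAt_of_isBigO_sq {E : Type*} [NormedAddCommGroup E] [NormedSpace ℝ E]
    {f : ℝ → E} {f' : E} {s : Set ℝ} {a : ℝ}
    (h : (fun t => f t - f a - (t - a) • f') =O[𝓝[s] a] fun t => (t - a) ^ 2) :
    HasDerivWithinAt f f' s a := by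
  have hsq : (fun t : ℝ => (t - a) ^ 2) =o[𝓝 a] fun t => t - a := by
    have := isLittleO_pow_sub_sub a one_lt_two
    simp only [← norm_pow] at this
    exact isLittleO_norm_left.mp this
  rw [hasDerivWithinAt_iff_isLittleO]
  exact h.trans_isLittleO (hsq.mono nhdsWithin_le_nhds)

section KernelEstimates

variable {E : Type*} [NormedAddCommGroup E] [NormedSpace ℝ E]

theorem norm_integral_sub_smul_le {g : ℝ → E} {C t : ℝ} (ht : 0 ≤ t)
    (hg : ∀ ξ ∈ Icc 0 t, ‖g ξ‖ ≤ C) :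
    ‖∫ ξ in (0:ℝ)..t, (t - ξ) • g ξ‖ ≤ C * t ^ 2 := by
  calc ‖∫ ξ in (0:ℝ)..t, (t - ξ) • g ξ‖ ≤ t * C * |t - 0| := by
        refine norm_integral_le_of_norm_le_const fun ξ hξ => ?_
        rw [uIoc_of_le ht] at hξ
        rw [norm_smul, Real.norm_of_nonneg (sub_nonneg.mpr hξ.2)]
        exact mul_le_mul (by linarith [hξ.1]) (hg ξ ⟨hξ.1.le, hξ.2⟩) (norm_nonneg _) ht
    _ = C * t ^ 2 := by rw [sub_zero, abs_of_nonneg ht]; ring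

theorem isBigO_integral_sub_smul {g : ℝ → E} {C h : ℝ} (hg : ∀ ξ ∈ Icc 0 h, ‖g ξ‖ ≤ C) :
    (fun t => ∫ ξ in (0:ℝ)..t, (t - ξ) • g ξ) =O[𝓟 (Icc 0 h)] fun t => t ^ 2 := by
  refine IsBigO.of_bound C (eventually_principal.mpr fun t ht => ?_)
  rw [Real.norm_of_nonneg (sq_nonneg t)]
  exact norm_integral_sub_smul_le ht.1 fun ξ hξ => hg ξ ⟨hξ.1, hξ.2.trans ht.2⟩

theorem isBigO_integral_integral_sub_smul {φ : ℝ → ℝ → E} {C h x : ℝ} (hx : 0 ≤ x)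
    (hφ : ∀ a ∈ Icc 0 x, ∀ ξ ∈ Icc 0 h, ‖φ a ξ‖ ≤ C) :
    (fun t => ∫ a in (0:ℝ)..x, ∫ ξ in (0:ℝ)..t, (t - ξ) • φ a ξ) =O[𝓟 (Icc 0 h)]
      fun t => t ^ 2 := by
  refine IsBigO.of_bound (C * x) (eventually_principal.mpr fun t ht => ?_)
  calc ‖∫ a in (0:ℝ)..x, ∫ ξ in (0:ℝ)..t, (t - ξ) • φ a ξ‖ ≤ C * t ^ 2 * |x - 0| := by
        refine norm_integral_le_of_norm_le_const fun a ha => ?_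
        rw [uIoc_of_le hx] at ha
        exact norm_integral_sub_smul_le ht.1 fun ξ hξ =>
          hφ a ⟨ha.1.le, ha.2⟩ ξ ⟨hξ.1, hξ.2.trans ht.2⟩
    _ = C * x * ‖t ^ 2‖ := by
        rw [sub_zero, abs_of_nonneg hx, Real.norm_of_nonneg (sq_nonneg t)]; ring

end KernelEstimates

namespace GoursatData

noncomputable def FRem (d : GoursatData) (x₂ x₃ x₄ : ℝ) : ℝ :=
  (∑ i₄ : Fin 2, x₄ ^ (i₄ : ℕ) * ∫ ξ₃ in (0:ℝ)..x₃, (x₃ - ξ₃) * d.φ002 i₄ ξ₃)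
  + (∑ i₄ : Fin 2, x₄ ^ (i₄ : ℕ) *
      ∫ ξ₂ in (0:ℝ)..x₂, ∫ ξ₃ in (0:ℝ)..x₃, (x₃ - ξ₃) * d.φ012 i₄ ξ₂ ξ₃)
  + (∫ ξ₃ in (0:ℝ)..x₃, (x₃ - ξ₃) * ∫ ξ₄ in (0:ℝ)..x₄, (x₄ - ξ₄) * d.φ0022 ξ₃ ξ₄)
  + ∫ ξ₂ in (0:ℝ)..x₂, ∫ ξ₃ in (0:ℝ)..x₃,
      (x₃ - ξ₃) * ∫ ξ₄ in (0:ℝ)..x₄, (x₄ - ξ₄) * d.φ0122 ξ₂ ξ₃ ξ₄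

theorem F_eq_M_add_mul_M_add_FRem (d : GoursatData) (x₂ x₃ x₄ : ℝ) :
    d.F x₂ x₃ x₄ = d.M 0 0 x₂ x₄ + x₃ * d.M 1 0 x₂ x₄ + d.FRem x₂ x₃ x₄ := by
  simp only [F, M, FRem, Fin.sum_univ_two, Fin.isValue, Fin.val_zero, Fin.val_one, pow_zero,
    pow_one, one_mul, mul_assoc, intervalIntegral.integral_const_mul, integral_same, mul_zero,
    add_zero]
  ring

theorem FRem_zero (d : GoursatData) (x₂ x₄ : ℝ) : d.FRem x₂ 0 x₄ = 0 := by
  simp [FRem]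

theorem isBigO_FRem {d : GoursatData} {h₁ h₂ h₃ h₄ x₂ x₄ : ℝ} (hd : d.ContOn h₁ h₂ h₃ h₄)
    (hx₂ : x₂ ∈ Icc 0 h₂) (hx₄ : x₄ ∈ Icc 0 h₄) :
    (fun t => d.FRem x₂ t x₄) =O[𝓟 (Icc 0 h₃)] fun t => t ^ 2 := by
  obtain ⟨-, -, h002, -, -, -, -, h012, -, h0022, -, -, h0122, -⟩ := hd
  refine (((IsBigO.fun_sum fun i₄ _ => ?_).add (IsBigO.fun_sum fun i₄ _ => ?_)).add ?_).add ?_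
  · obtain ⟨C, hC⟩ := isCompact_Icc.exists_bound_of_continuousOn (h002 i₄)
    exact (isBigO_integral_sub_smul hC).const_mul_left _
  · obtain ⟨C, hC⟩ :=
      (isCompact_Icc.prod isCompact_Icc).exists_bound_of_continuousOn (h012 i₄)
    exact (isBigO_integral_integral_sub_smul hx₂.1 fun a ha ξ hξ =>
      hC (a, ξ) ⟨⟨ha.1, ha.2.trans hx₂.2⟩, hξ⟩).const_mul_left _
  · obtain ⟨C, hC⟩ := (isCompact_Icc.prod isCompact_Icc).exists_bound_of_continuousOn h0022
    exact isBigO_integral_sub_smul fun ξ hξ => norm_integral_sub_smul_le hx₄.1 fun η hη =>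
      hC (ξ, η) ⟨hξ, hη.1, hη.2.trans hx₄.2⟩
  · obtain ⟨C, hC⟩ := IsCompact.exists_bound_of_continuousOn
      (isCompact_Icc.prod (isCompact_Icc.prod isCompact_Icc)) h0122
    exact isBigO_integral_integral_sub_smul hx₂.1 fun a ha ξ hξ =>
      norm_integral_sub_smul_le hx₄.1 fun η hη =>
        hC (a, ξ, η) ⟨⟨ha.1, ha.2.trans hx₂.2⟩, hξ, hη.1, hη.2.trans hx₄.2⟩

end GoursatData

theorem goursat_compat_Fx3_Phi_general
    (h₁ h₂ h₃ h₄ : ℝ)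
    (d : GoursatData) (hd : d.ContOn h₁ h₂ h₃ h₄) :
    ∀ x₂ ∈ Icc (0:ℝ) h₂, ∀ x₄ ∈ Icc (0:ℝ) h₄,
      HasDerivWithinAt (fun t => d.F x₂ t x₄) (d.M 1 0 x₂ x₄) (Icc 0 h₃) 0 := by
  intro x₂ hx₂ x₄ hx₄
  refine hasDerivWithinAt_of_isBigO_sq ?_
  have hrem := (d.isBigO_FRem hd hx₂ hx₄).mono (inf_le_right : 𝓝[Icc 0 h₃] (0:ℝ) ≤ _)
  refine hrem.congr (fun t => ?_) fun t => by rw [sub_zero]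
  simp only [d.F_eq_M_add_mul_M_add_FRem, d.FRem_zero, sub_zero, smul_eq_mul]
  ring

/-- the compatibility condition `F_{x₃}(x₂,0,x₄) = Φ(0,x₂,x₄)`, where
`Φ = M₁`: the one-sided derivative of `x₃ ↦ F(x₂,x₃,x₄)` at `x₃ = 0` exists and
equals `M₁(0,x₂,x₄)`. -/
theorem goursat_compat_Fx3_Phi
    (h₁ h₂ h₃ h₄ : ℝ) (hh₁ : 0 < h₁) (hh₂ : 0 < h₂) (hh₃ : 0 < h₃) (hh₄ : 0 < h₄)
    (d : GoursatData) (hd : d.ContOn h₁ h₂ h₃ h₄) :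
    ∀ x₂ ∈ Icc (0:ℝ) h₂, ∀ x₄ ∈ Icc (0:ℝ) h₄,
      HasDerivWithinAt (fun t => d.F x₂ t x₄) (d.M 1 0 x₂ x₄) (Icc 0 h₃) 0 :=
  goursat_compat_Fx3_Phi_general h₁ h₂ h₃ h₄ d hd
end

section
/- For every (x₁, x₂) ∈ [0,h₁] × [0,h₂]: the function x₄ ↦ M₁(x₁, x₂, x₄) has a (one-sided) derivative at x₄ = 0, the function x₃ ↦ L₁(x₁, x₂, x₃) has a (one-sided) derivative at x₃ = 0, and these two derivatives are equal; i.e. the compatibility condition Φ_{x₄}(x₁, x₂, 0) = S_{x₃}(x₁, x₂, 0) holds, where Φ = M₁ and S = L₁. -/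
open MeasureTheory Set intervalIntegral

/-!
The `x₄`-derivative of `Φ = M₁` at `x₄ = 0` only sees the terms of `M₁` that are linear in `x₄`,
because every term `∫₀^{x₄} (x₄ - τ₄) φ(…, τ₄) dτ₄` is `O(x₄²)` when `φ` is bounded. The linear
coefficient is built from `φ_{i₁,i₂,1,1}` alone. Since `S = L₁` is `M₁` for the data with the roles
of `x₃` and `x₄` exchanged, and that exchange fixes `φ_{i₁,i₂,1,1}`, both derivatives agree.
-/

theorem hasDerivWithinAt_zero_of_abs_le_mul_sq {f : ℝ → ℝ} {s : Set ℝ} {C : ℝ} (h0 : f 0 = 0)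
    (hf : ∀ t ∈ s, |f t| ≤ C * t ^ 2) : HasDerivWithinAt f 0 s 0 := by
  rw [hasDerivWithinAt_iff_isLittleO]
  simp only [h0, sub_zero, smul_zero]
  have hsq : f =O[nhdsWithin 0 s] fun t => t ^ 2 :=
    .of_bound C <| eventually_nhdsWithin_of_forall fun t ht => by
      simpa only [Real.norm_eq_abs, abs_pow, sq_abs] using hf t ht
  exact hsq.trans_isLittleO ((Asymptotics.isLittleO_pow_id one_lt_two).mono nhdsWithin_le_nhds)

theorem abs_intervalIntegral_le_mul {F : ℝ → ℝ} {a K : ℝ} (ha : 0 ≤ a)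
    (hF : ∀ σ ∈ Icc 0 a, |F σ| ≤ K) : |∫ σ in (0:ℝ)..a, F σ| ≤ a * K := by
  have h : ‖∫ σ in (0:ℝ)..a, F σ‖ ≤ K * |a - 0| :=
    intervalIntegral.norm_integral_le_of_norm_le_const fun σ hσ =>
      hF σ (Ioc_subset_Icc_self (uIoc_of_le ha ▸ hσ))
  rwa [Real.norm_eq_abs, sub_zero, abs_of_nonneg ha, mul_comm] at h

theorem abs_integral_sub_mul_le {g : ℝ → ℝ} {t B : ℝ} (ht : 0 ≤ t)
    (hg : ∀ τ ∈ Icc 0 t, |g τ| ≤ B) : |∫ τ in (0:ℝ)..t, (t - τ) * g τ| ≤ B * t ^ 2 := by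
  calc |∫ τ in (0:ℝ)..t, (t - τ) * g τ| ≤ t * (t * B) :=
        abs_intervalIntegral_le_mul ht fun τ hτ => by
          rw [abs_mul, abs_of_nonneg (sub_nonneg.2 hτ.2)]
          exact mul_le_mul (by linarith [hτ.1]) (hg τ hτ) (abs_nonneg _) ht
    _ = B * t ^ 2 := by ring

theorem hasDerivWithinAt_integral_sub_mul_zero {g : ℝ → ℝ} {h : ℝ}
    (hg : ContinuousOn g (Icc 0 h)) :
    HasDerivWithinAt (fun t => ∫ τ in (0:ℝ)..t, (t - τ) * g τ) 0 (Icc 0 h) 0 := by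
  obtain ⟨B, hB⟩ := isCompact_Icc.exists_bound_of_continuousOn hg
  refine hasDerivWithinAt_zero_of_abs_le_mul_sq (C := B) (by simp) fun t ht => ?_
  exact abs_integral_sub_mul_le ht.1 fun τ hτ => hB τ ⟨hτ.1, hτ.2.trans ht.2⟩

theorem hasDerivWithinAt_integral_integral_sub_mul_zero {g : ℝ → ℝ → ℝ} {a x h : ℝ}
    (hx : x ∈ Icc 0 a)
    (hg : ContinuousOn (fun q : ℝ × ℝ => g q.1 q.2) (Icc 0 a ×ˢ Icc 0 h)) :
    HasDerivWithinAt (fun t => ∫ σ in (0:ℝ)..x, ∫ τ in (0:ℝ)..t, (t - τ) * g σ τ)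
      0 (Icc 0 h) 0 := by
  obtain ⟨B, hB⟩ := (isCompact_Icc.prod isCompact_Icc).exists_bound_of_continuousOn hg
  refine hasDerivWithinAt_zero_of_abs_le_mul_sq (C := x * B) (by simp) fun t ht => ?_
  calc _ ≤ x * (B * t ^ 2) :=
        abs_intervalIntegral_le_mul hx.1 fun σ hσ =>
          abs_integral_sub_mul_le ht.1 fun τ hτ =>
            hB (σ, τ) ⟨⟨hσ.1, hσ.2.trans hx.2⟩, hτ.1, hτ.2.trans ht.2⟩
    _ = x * B * t ^ 2 := by ring

theorem hasDerivWithinAt_integral_integral_integral_sub_mul_zero {g : ℝ → ℝ → ℝ → ℝ}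
    {a b x y h : ℝ} (hx : x ∈ Icc 0 a) (hy : y ∈ Icc 0 b)
    (hg : ContinuousOn (fun q : ℝ × ℝ × ℝ => g q.1 q.2.1 q.2.2)
      (Icc 0 a ×ˢ Icc 0 b ×ˢ Icc 0 h)) :
    HasDerivWithinAt
      (fun t => ∫ ρ in (0:ℝ)..x, ∫ σ in (0:ℝ)..y, ∫ τ in (0:ℝ)..t, (t - τ) * g ρ σ τ)
      0 (Icc 0 h) 0 := by
  obtain ⟨B, hB⟩ :=
    (isCompact_Icc.prod (isCompact_Icc.prod isCompact_Icc)).exists_bound_of_continuousOn hg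
  refine hasDerivWithinAt_zero_of_abs_le_mul_sq (C := x * (y * B)) (by simp) fun t ht => ?_
  calc _ ≤ x * (y * (B * t ^ 2)) :=
        abs_intervalIntegral_le_mul hx.1 fun ρ hρ =>
          abs_intervalIntegral_le_mul hy.1 fun σ hσ =>
            abs_integral_sub_mul_le ht.1 fun τ hτ =>
              hB (ρ, σ, τ)
                ⟨⟨hρ.1, hρ.2.trans hx.2⟩, ⟨hσ.1, hσ.2.trans hy.2⟩, hτ.1, hτ.2.trans ht.2⟩
    _ = x * (y * B) * t ^ 2 := by ring

namespace GoursatData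

def swap34 (d : GoursatData) : GoursatData where
  φ00 i₃ i₄ := d.φ00 i₄ i₃
  φ10 i₃ i₄ := d.φ10 i₄ i₃
  φ01 i₃ i₄ := d.φ01 i₄ i₃
  φ002 := d.φ00d2
  φ00d2 := d.φ002
  φ11 i₃ i₄ := d.φ11 i₄ i₃
  φ102 := d.φ10d2
  φ10d2 := d.φ102
  φ012 := d.φ01d2
  φ01d2 := d.φ012
  φ0022 ξ₃ ξ₄ := d.φ0022 ξ₄ ξ₃
  φ112 := d.φ11d2
  φ11d2 := d.φ112
  φ0122 ξ₂ ξ₃ ξ₄ := d.φ0122 ξ₂ ξ₄ ξ₃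
  φ1022 ξ₁ ξ₃ ξ₄ := d.φ1022 ξ₁ ξ₄ ξ₃

theorem L_eq_swap34_M (d : GoursatData) : d.L = d.swap34.M := rfl

noncomputable def linearCoeffM (d : GoursatData) (k : Fin 2) (x₁ x₂ : ℝ) : ℝ :=
  d.φ00 k 1 + (∫ τ₁ in (0:ℝ)..x₁, d.φ10 k 1 τ₁) + (∫ τ₂ in (0:ℝ)..x₂, d.φ01 k 1 τ₂)
  + ∫ τ₁ in (0:ℝ)..x₁, ∫ τ₂ in (0:ℝ)..x₂, d.φ11 k 1 τ₁ τ₂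

theorem swap34_linearCoeffM_one (d : GoursatData) :
    d.swap34.linearCoeffM 1 = d.linearCoeffM 1 := rfl

theorem hasDerivWithinAt_M (d : GoursatData) (k : Fin 2) {h₁ h₂ h₄ x₁ x₂ : ℝ}
    (hx₁ : x₁ ∈ Icc 0 h₁) (hx₂ : x₂ ∈ Icc 0 h₂)
    (h00d2 : ContinuousOn (d.φ00d2 k) (Icc 0 h₄))
    (h01d2 : ContinuousOn (fun q : ℝ × ℝ => d.φ01d2 k q.1 q.2) (Icc 0 h₂ ×ˢ Icc 0 h₄))
    (h10d2 : ContinuousOn (fun q : ℝ × ℝ => d.φ10d2 k q.1 q.2) (Icc 0 h₁ ×ˢ Icc 0 h₄))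
    (h11d2 : ContinuousOn (fun q : ℝ × ℝ × ℝ => d.φ11d2 k q.1 q.2.1 q.2.2)
      (Icc 0 h₁ ×ˢ Icc 0 h₂ ×ˢ Icc 0 h₄)) :
    HasDerivWithinAt (fun t => d.M k x₁ x₂ t) (d.linearCoeffM k x₁ x₂) (Icc 0 h₄) 0 := by
  have const (c : ℝ) : HasDerivWithinAt (fun _ : ℝ => c) 0 (Icc 0 h₄) 0 :=
    hasDerivWithinAt_const _ _ c
  have lin (c : ℝ) : HasDerivWithinAt (fun t : ℝ => t * c) c (Icc 0 h₄) 0 := by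
    simpa using (hasDerivWithinAt_id (0:ℝ) (Icc 0 h₄)).mul_const c
  unfold M
  refine (((((((((((const _).add (lin _)).add (const _)).add (lin _)).add (const _)).add
    (lin _)).add (hasDerivWithinAt_integral_sub_mul_zero h00d2)).add (const _)).add
    (lin _)).add (hasDerivWithinAt_integral_integral_sub_mul_zero hx₂ h01d2)).add
    (hasDerivWithinAt_integral_integral_sub_mul_zero hx₁ h10d2)).add
    (hasDerivWithinAt_integral_integral_integral_sub_mul_zero hx₁ hx₂ h11d2) |>.congr_deriv ?_
  rw [linearCoeffM]
  ring

end GoursatData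

theorem goursat_compat_Phix4_Sx3_general
    (h₁ h₂ h₃ h₄ : ℝ)
    (d : GoursatData) (hd : d.ContOn h₁ h₂ h₃ h₄) :
    ∀ x₁ ∈ Icc (0:ℝ) h₁, ∀ x₂ ∈ Icc (0:ℝ) h₂,
      ∃ c : ℝ,
        HasDerivWithinAt (fun t => d.M 1 x₁ x₂ t) c (Icc 0 h₄) 0 ∧
        HasDerivWithinAt (fun t => d.L 1 x₁ x₂ t) c (Icc 0 h₃) 0 := by
  intro x₁ hx₁ x₂ hx₂
  obtain ⟨-, -, h002, h00d2, -, h102, h10d2, h012, h01d2, -, h112, h11d2, -, -⟩ := hd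
  refine ⟨d.linearCoeffM 1 x₁ x₂,
    d.hasDerivWithinAt_M 1 hx₁ hx₂ (h00d2 1) (h01d2 1) (h10d2 1) (h11d2 1), ?_⟩
  rw [GoursatData.L_eq_swap34_M, ← GoursatData.swap34_linearCoeffM_one]
  exact d.swap34.hasDerivWithinAt_M 1 hx₁ hx₂ (h002 1) (h012 1) (h102 1) (h112 1)

/-- the compatibility condition `Φ_{x₄}(x₁,x₂,0) = S_{x₃}(x₁,x₂,0)`,
where `Φ = M₁` and `S = L₁`: both one-sided derivatives exist and are equal. -/
theorem goursat_compat_Phix4_Sx3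
    (h₁ h₂ h₃ h₄ : ℝ) (hh₁ : 0 < h₁) (hh₂ : 0 < h₂) (hh₃ : 0 < h₃) (hh₄ : 0 < h₄)
    (d : GoursatData) (hd : d.ContOn h₁ h₂ h₃ h₄) :
    ∀ x₁ ∈ Icc (0:ℝ) h₁, ∀ x₂ ∈ Icc (0:ℝ) h₂,
      ∃ c : ℝ,
        HasDerivWithinAt (fun t => d.M 1 x₁ x₂ t) c (Icc 0 h₄) 0 ∧
        HasDerivWithinAt (fun t => d.L 1 x₁ x₂ t) c (Icc 0 h₃) 0 :=
  goursat_compat_Phix4_Sx3_general h₁ h₂ h₃ h₄ d hd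
end

section
/- The function g₀ satisfies the nonclassical Goursat condition V_{1,0,2,2}: applying to g₀ successively the partial derivative ∂/∂x₁, then ∂/∂x₃ twice, then ∂/∂x₄ twice (each derivative existing at every point of Ḡ, one-sidedly at boundary points), one obtains the function (x₁,x₂,x₃,x₄) ↦ φ_{1,0,2,2}(x₁,x₃,x₄); in particular D₁D₃²D₄² g₀(x₁, 0, x₃, x₄) = φ_{1,0,2,2}(x₁, x₃, x₄) for all (x₁,x₃,x₄) ∈ [0,h₁] × [0,h₃] × [0,h₄]. -/
open MeasureTheory Set intervalIntegral

/-! Extending the data continuously off their closed boxes (Tietze) changes neither `g₀` on `Ḡ`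
nor `φ_{1,0,2,2}` there, so all derivatives may be taken two-sided on `ℝ`. By the fundamental
theorem of calculus, `∂g₀/∂x₁` is the trace `F` built from the data `φ_{1,…}` frozen at `x₁`.
In `F`, the variable `x₃` enters only through polynomials of degree `≤ 1` and through the kernel
`x₃ - τ₃`, and `∂ₜ ∫₀ᵗ (t - τ) k τ dτ = ∫₀ᵗ k`; so two `x₃`-derivatives, and likewise two
`x₄`-derivatives, leave `φ_{0,0,2,2} + ∫₀^{x₂} φ_{0,1,2,2}`, which for the frozen data is
`φ_{1,0,2,2}`. -/

theorem exists_continuous_eqOn {X : Type*} [TopologicalSpace X] [NormalSpace X] {s : Set X}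
    (hs : IsClosed s) {f : X → ℝ} (hf : ContinuousOn f s) :
    ∃ g : X → ℝ, Continuous g ∧ EqOn g f s := by
  obtain ⟨g, hg⟩ := ContinuousMap.exists_restrict_eq hs ⟨s.domRestrict f, hf.domRestrict⟩
  exact ⟨g, g.continuous, fun x hx => DFunLike.congr_fun hg ⟨x, hx⟩⟩

theorem integral_eq_of_eqOn_Icc {f g : ℝ → ℝ} {x h : ℝ} (hx : x ∈ Icc 0 h)
    (hfg : EqOn f g (Icc 0 h)) : ∫ τ in (0:ℝ)..x, f τ = ∫ τ in (0:ℝ)..x, g τ :=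
  integral_congr (hfg.mono (uIcc_subset_Icc (left_mem_Icc.2 (hx.1.trans hx.2)) hx))

theorem integral_integral_swap_of_continuous {f : ℝ → ℝ → ℝ}
    (hf : Continuous fun p : ℝ × ℝ => f p.1 p.2) (a b c d : ℝ) :
    ∫ σ in a..b, ∫ τ in c..d, f σ τ = ∫ τ in c..d, ∫ σ in a..b, f σ τ :=
  intervalIntegral_intervalIntegral_swap <|
    (hf.continuousOn.integrableOn_compact (isCompact_uIcc.prod isCompact_uIcc)).mono_set
      (prod_mono uIoc_subset_uIcc uIoc_subset_uIcc)

theorem hasDerivAt_integral_sub_mul {k : ℝ → ℝ} (hk : Continuous k) (a x : ℝ) :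
    HasDerivAt (fun t => ∫ τ in a..t, (t - τ) * k τ) (∫ τ in a..x, k τ) x := by
  have hτk : Continuous fun τ => τ * k τ := by fun_prop
  have hsplit : (fun t => ∫ τ in a..t, (t - τ) * k τ)
      = fun t => t * (∫ τ in a..t, k τ) - ∫ τ in a..t, τ * k τ := by
    funext t
    rw [← intervalIntegral.integral_const_mul,
      ← intervalIntegral.integral_sub ((hk.const_mul t).intervalIntegrable _ _)
        (hτk.intervalIntegrable _ _)]
    simp only [sub_mul]
  rw [hsplit]
  exact (((hasDerivAt_id' x).fun_mul (hk.integral_hasStrictDerivAt a x).hasDerivAt).fun_sub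
    (hτk.integral_hasStrictDerivAt a x).hasDerivAt).congr_deriv (by ring)

theorem hasDerivAt_integral_integral_sub_mul {f : ℝ → ℝ → ℝ}
    (hf : Continuous fun p : ℝ × ℝ => f p.1 p.2) (a b c x : ℝ) :
    HasDerivAt (fun t => ∫ σ in a..b, ∫ τ in c..t, (t - τ) * f σ τ)
      (∫ τ in c..x, ∫ σ in a..b, f σ τ) x := by
  have hswap : (fun t => ∫ σ in a..b, ∫ τ in c..t, (t - τ) * f σ τ)
      = fun t => ∫ τ in c..t, (t - τ) * ∫ σ in a..b, f σ τ := by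
    funext t
    rw [integral_integral_swap_of_continuous (by fun_prop)]
    simp only [intervalIntegral.integral_const_mul]
  rw [hswap]
  exact hasDerivAt_integral_sub_mul (by fun_prop) c x

namespace GoursatData

variable (d : GoursatData)

-- `FirstX₁` refers to the data `φ_{1,…}` of first order in `x₁`, `SecondX₃` to the data
-- `φ_{0,i₂,2,…}` of the trace `F`, of second order in `x₃`.
structure ContinuousFirstX₁ : Prop where
  φ10 : ∀ i₃ i₄, Continuous (d.φ10 i₃ i₄)
  φ11 : ∀ i₃ i₄, Continuous fun q : ℝ × ℝ => d.φ11 i₃ i₄ q.1 q.2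
  φ102 : ∀ i₄, Continuous fun q : ℝ × ℝ => d.φ102 i₄ q.1 q.2
  φ10d2 : ∀ i₃, Continuous fun q : ℝ × ℝ => d.φ10d2 i₃ q.1 q.2
  φ112 : ∀ i₄, Continuous fun q : ℝ × ℝ × ℝ => d.φ112 i₄ q.1 q.2.1 q.2.2
  φ11d2 : ∀ i₃, Continuous fun q : ℝ × ℝ × ℝ => d.φ11d2 i₃ q.1 q.2.1 q.2.2
  φ1022 : Continuous fun q : ℝ × ℝ × ℝ => d.φ1022 q.1 q.2.1 q.2.2

structure ContinuousSecondX₃ : Prop where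
  φ002 : ∀ i₄, Continuous (d.φ002 i₄)
  φ012 : ∀ i₄, Continuous fun q : ℝ × ℝ => d.φ012 i₄ q.1 q.2
  φ0022 : Continuous fun q : ℝ × ℝ => d.φ0022 q.1 q.2
  φ0122 : Continuous fun q : ℝ × ℝ × ℝ => d.φ0122 q.1 q.2.1 q.2.2

def partialX₁ (x₁ : ℝ) : GoursatData where
  φ00 i₃ i₄ := d.φ10 i₃ i₄ x₁
  φ10 _ _ _ := 0
  φ01 i₃ i₄ := d.φ11 i₃ i₄ x₁
  φ002 i₄ := d.φ102 i₄ x₁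
  φ00d2 i₃ := d.φ10d2 i₃ x₁
  φ11 _ _ _ _ := 0
  φ102 _ _ _ := 0
  φ10d2 _ _ _ := 0
  φ012 i₄ := d.φ112 i₄ x₁
  φ01d2 i₃ := d.φ11d2 i₃ x₁
  φ0022 := d.φ1022 x₁
  φ112 _ _ _ _ := 0
  φ11d2 _ _ _ _ := 0
  φ0122 _ _ _ := 0
  φ1022 _ _ _ := 0

noncomputable def F₃ (x₂ x₃ x₄ : ℝ) : ℝ :=
  (∑ i₄ : Fin 2, x₄ ^ (i₄ : ℕ) * d.φ00 1 i₄)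
  + (∑ i₄ : Fin 2, x₄ ^ (i₄ : ℕ) * ∫ ξ₂ in (0:ℝ)..x₂, d.φ01 1 i₄ ξ₂)
  + (∑ i₄ : Fin 2, x₄ ^ (i₄ : ℕ) * ∫ ξ₃ in (0:ℝ)..x₃, d.φ002 i₄ ξ₃)
  + (∫ ξ₄ in (0:ℝ)..x₄, (x₄ - ξ₄) * d.φ00d2 1 ξ₄)
  + (∑ i₄ : Fin 2, x₄ ^ (i₄ : ℕ) * ∫ ξ₃ in (0:ℝ)..x₃, ∫ ξ₂ in (0:ℝ)..x₂, d.φ012 i₄ ξ₂ ξ₃)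
  + (∫ ξ₃ in (0:ℝ)..x₃, ∫ ξ₄ in (0:ℝ)..x₄, (x₄ - ξ₄) * d.φ0022 ξ₃ ξ₄)
  + (∫ ξ₂ in (0:ℝ)..x₂, ∫ ξ₄ in (0:ℝ)..x₄, (x₄ - ξ₄) * d.φ01d2 1 ξ₂ ξ₄)
  + ∫ ξ₃ in (0:ℝ)..x₃, ∫ ξ₂ in (0:ℝ)..x₂, ∫ ξ₄ in (0:ℝ)..x₄, (x₄ - ξ₄) * d.φ0122 ξ₂ ξ₃ ξ₄

noncomputable def F₃₃ (x₂ x₃ x₄ : ℝ) : ℝ :=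
  (∑ i₄ : Fin 2, x₄ ^ (i₄ : ℕ) * d.φ002 i₄ x₃)
  + (∑ i₄ : Fin 2, x₄ ^ (i₄ : ℕ) * ∫ ξ₂ in (0:ℝ)..x₂, d.φ012 i₄ ξ₂ x₃)
  + (∫ ξ₄ in (0:ℝ)..x₄, (x₄ - ξ₄) * d.φ0022 x₃ ξ₄)
  + ∫ ξ₂ in (0:ℝ)..x₂, ∫ ξ₄ in (0:ℝ)..x₄, (x₄ - ξ₄) * d.φ0122 ξ₂ x₃ ξ₄

noncomputable def F₃₃₄ (x₂ x₃ x₄ : ℝ) : ℝ :=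
  d.φ002 1 x₃ + (∫ ξ₂ in (0:ℝ)..x₂, d.φ012 1 ξ₂ x₃) + (∫ ξ₄ in (0:ℝ)..x₄, d.φ0022 x₃ ξ₄)
  + ∫ ξ₄ in (0:ℝ)..x₄, ∫ ξ₂ in (0:ℝ)..x₂, d.φ0122 ξ₂ x₃ ξ₄

variable {d}

theorem ContinuousFirstX₁.continuousSecondX₃_partialX₁ (hd : d.ContinuousFirstX₁) (x₁ : ℝ) :
    (d.partialX₁ x₁).ContinuousSecondX₃ := by
  obtain ⟨-, -, h102, -, h112, -, h1022⟩ := hd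
  constructor <;> simp only [partialX₁] <;> fun_prop

theorem hasDerivAt_F (hd : d.ContinuousSecondX₃) (x₂ x₃ x₄ : ℝ) :
    HasDerivAt (fun t => d.F x₂ t x₄) (d.F₃ x₂ x₃ x₄) x₃ := by
  obtain ⟨h002, h012, h0022, h0122⟩ := hd
  simp only [F, mul_assoc, intervalIntegral.integral_const_mul]
  have h₁ := HasDerivAt.fun_sum (u := Finset.univ) fun (i₃ : Fin 2) _ =>
    HasDerivAt.fun_sum (u := Finset.univ) fun (i₄ : Fin 2) _ =>
      (hasDerivAt_pow (i₃ : ℕ) x₃).mul_const (x₄ ^ (i₄ : ℕ) * d.φ00 i₃ i₄)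
  have h₂ := HasDerivAt.fun_sum (u := Finset.univ) fun (i₃ : Fin 2) _ =>
    HasDerivAt.fun_sum (u := Finset.univ) fun (i₄ : Fin 2) _ =>
      (hasDerivAt_pow (i₃ : ℕ) x₃).mul_const (x₄ ^ (i₄ : ℕ) * ∫ ξ₂ in (0:ℝ)..x₂, d.φ01 i₃ i₄ ξ₂)
  have h₃ := HasDerivAt.fun_sum (u := Finset.univ) fun (i₄ : Fin 2) _ =>
    (hasDerivAt_integral_sub_mul (h002 i₄) 0 x₃).const_mul (x₄ ^ (i₄ : ℕ))
  have h₄ := HasDerivAt.fun_sum (u := Finset.univ) fun (i₃ : Fin 2) _ =>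
    (hasDerivAt_pow (i₃ : ℕ) x₃).mul_const (∫ ξ₄ in (0:ℝ)..x₄, (x₄ - ξ₄) * d.φ00d2 i₃ ξ₄)
  have h₅ := HasDerivAt.fun_sum (u := Finset.univ) fun (i₄ : Fin 2) _ =>
    (hasDerivAt_integral_integral_sub_mul (h012 i₄) 0 x₂ 0 x₃).const_mul (x₄ ^ (i₄ : ℕ))
  have h₆ := hasDerivAt_integral_sub_mul (show Continuous fun ξ₃ =>
    ∫ ξ₄ in (0:ℝ)..x₄, (x₄ - ξ₄) * d.φ0022 ξ₃ ξ₄ by fun_prop) 0 x₃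
  have h₇ := HasDerivAt.fun_sum (u := Finset.univ) fun (i₃ : Fin 2) _ =>
    (hasDerivAt_pow (i₃ : ℕ) x₃).mul_const
      (∫ ξ₂ in (0:ℝ)..x₂, ∫ ξ₄ in (0:ℝ)..x₄, (x₄ - ξ₄) * d.φ01d2 i₃ ξ₂ ξ₄)
  have h₈ := hasDerivAt_integral_integral_sub_mul
    (f := fun ξ₂ ξ₃ => ∫ ξ₄ in (0:ℝ)..x₄, (x₄ - ξ₄) * d.φ0122 ξ₂ ξ₃ ξ₄) (by fun_prop) 0 x₂ 0 x₃
  exact (h₁.fun_add h₂ |>.fun_add h₃ |>.fun_add h₄ |>.fun_add h₅ |>.fun_add h₆ |>.fun_add h₇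
    |>.fun_add h₈).congr_deriv (by simp [F₃, Fin.sum_univ_two])

theorem hasDerivAt_F₃ (hd : d.ContinuousSecondX₃) (x₂ x₃ x₄ : ℝ) :
    HasDerivAt (fun t => d.F₃ x₂ t x₄) (d.F₃₃ x₂ x₃ x₄) x₃ := by
  obtain ⟨h002, h012, h0022, h0122⟩ := hd
  have h₃ := HasDerivAt.fun_sum (u := Finset.univ) fun (i₄ : Fin 2) _ =>
    ((h002 i₄).integral_hasStrictDerivAt 0 x₃).hasDerivAt.const_mul (x₄ ^ (i₄ : ℕ))
  have h₅ := HasDerivAt.fun_sum (u := Finset.univ) fun (i₄ : Fin 2) _ =>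
    ((show Continuous fun ξ₃ => ∫ ξ₂ in (0:ℝ)..x₂, d.φ012 i₄ ξ₂ ξ₃ by
      fun_prop).integral_hasStrictDerivAt 0 x₃).hasDerivAt.const_mul (x₄ ^ (i₄ : ℕ))
  have h₆ := (show Continuous fun ξ₃ => ∫ ξ₄ in (0:ℝ)..x₄, (x₄ - ξ₄) * d.φ0022 ξ₃ ξ₄ by
    fun_prop).integral_hasStrictDerivAt 0 x₃
  have h₈ := (show Continuous fun ξ₃ => ∫ ξ₂ in (0:ℝ)..x₂, ∫ ξ₄ in (0:ℝ)..x₄,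
    (x₄ - ξ₄) * d.φ0122 ξ₂ ξ₃ ξ₄ by fun_prop).integral_hasStrictDerivAt 0 x₃
  exact ((hasDerivAt_const _ _).fun_add h₃ |>.fun_add (hasDerivAt_const _ _) |>.fun_add h₅
    |>.fun_add h₆.hasDerivAt |>.fun_add (hasDerivAt_const _ _) |>.fun_add h₈.hasDerivAt).congr_deriv
    (by simp only [F₃₃]; ring)

theorem hasDerivAt_F₃₃ (h0022 : Continuous fun q : ℝ × ℝ => d.φ0022 q.1 q.2)
    (h0122 : Continuous fun q : ℝ × ℝ × ℝ => d.φ0122 q.1 q.2.1 q.2.2) (x₂ x₃ x₄ : ℝ) :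
    HasDerivAt (fun t => d.F₃₃ x₂ x₃ t) (d.F₃₃₄ x₂ x₃ x₄) x₄ := by
  have h₁ := HasDerivAt.fun_sum (u := Finset.univ) fun (i₄ : Fin 2) _ =>
    (hasDerivAt_pow (i₄ : ℕ) x₄).mul_const (d.φ002 i₄ x₃)
  have h₂ := HasDerivAt.fun_sum (u := Finset.univ) fun (i₄ : Fin 2) _ =>
    (hasDerivAt_pow (i₄ : ℕ) x₄).mul_const (∫ ξ₂ in (0:ℝ)..x₂, d.φ012 i₄ ξ₂ x₃)
  have h₃ := hasDerivAt_integral_sub_mul (show Continuous fun ξ₄ => d.φ0022 x₃ ξ₄ by fun_prop) 0 x₄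
  have h₄ := hasDerivAt_integral_integral_sub_mul (f := fun ξ₂ ξ₄ => d.φ0122 ξ₂ x₃ ξ₄)
    (by fun_prop) 0 x₂ 0 x₄
  exact (h₁.fun_add h₂ |>.fun_add h₃ |>.fun_add h₄).congr_deriv (by simp [F₃₃₄, Fin.sum_univ_two])

theorem hasDerivAt_F₃₃₄ (h0022 : Continuous fun q : ℝ × ℝ => d.φ0022 q.1 q.2)
    (h0122 : Continuous fun q : ℝ × ℝ × ℝ => d.φ0122 q.1 q.2.1 q.2.2) (x₂ x₃ x₄ : ℝ) :
    HasDerivAt (fun t => d.F₃₃₄ x₂ x₃ t)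
      (d.φ0022 x₃ x₄ + ∫ ξ₂ in (0:ℝ)..x₂, d.φ0122 ξ₂ x₃ x₄) x₄ := by
  have h₃ := (show Continuous fun ξ₄ => d.φ0022 x₃ ξ₄ by fun_prop).integral_hasStrictDerivAt 0 x₄
  have h₄ := (show Continuous fun ξ₄ => ∫ ξ₂ in (0:ℝ)..x₂, d.φ0122 ξ₂ x₃ ξ₄ by
    fun_prop).integral_hasStrictDerivAt 0 x₄
  exact ((hasDerivAt_const _ _).fun_add h₃.hasDerivAt |>.fun_add h₄.hasDerivAt).congr_deriv
    (by rw [zero_add])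

theorem hasDerivAt_g0 (hd : d.ContinuousFirstX₁) (x₁ x₂ x₃ x₄ : ℝ) :
    HasDerivAt (fun t => d.g0 t x₂ x₃ x₄) ((d.partialX₁ x₁).F x₂ x₃ x₄) x₁ := by
  obtain ⟨h10, h11, h102, h10d2, h112, h11d2, h1022⟩ := hd
  have h₂ := HasDerivAt.fun_sum (u := Finset.univ) fun (i₃ : Fin 2) _ =>
    HasDerivAt.fun_sum (u := Finset.univ) fun (i₄ : Fin 2) _ =>
      ((h10 i₃ i₄).integral_hasStrictDerivAt 0 x₁).hasDerivAt.const_mul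
        (x₃ ^ (i₃ : ℕ) * x₄ ^ (i₄ : ℕ))
  have h₆ := HasDerivAt.fun_sum (u := Finset.univ) fun (i₃ : Fin 2) _ =>
    HasDerivAt.fun_sum (u := Finset.univ) fun (i₄ : Fin 2) _ =>
      ((show Continuous fun τ₁ => ∫ τ₂ in (0:ℝ)..x₂, d.φ11 i₃ i₄ τ₁ τ₂ by
        fun_prop).integral_hasStrictDerivAt 0 x₁).hasDerivAt.const_mul
        (x₃ ^ (i₃ : ℕ) * x₄ ^ (i₄ : ℕ))
  have h₇ := HasDerivAt.fun_sum (u := Finset.univ) fun (i₄ : Fin 2) _ =>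
    ((show Continuous fun τ₁ => ∫ τ₃ in (0:ℝ)..x₃, (x₃ - τ₃) * d.φ102 i₄ τ₁ τ₃ by
      fun_prop).integral_hasStrictDerivAt 0 x₁).hasDerivAt.const_mul (x₄ ^ (i₄ : ℕ))
  have h₈ := HasDerivAt.fun_sum (u := Finset.univ) fun (i₃ : Fin 2) _ =>
    ((show Continuous fun τ₁ => ∫ τ₄ in (0:ℝ)..x₄, (x₄ - τ₄) * d.φ10d2 i₃ τ₁ τ₄ by
      fun_prop).integral_hasStrictDerivAt 0 x₁).hasDerivAt.const_mul (x₃ ^ (i₃ : ℕ))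
  have h₁₂ := HasDerivAt.fun_sum (u := Finset.univ) fun (i₄ : Fin 2) _ =>
    ((show Continuous fun τ₁ => ∫ τ₂ in (0:ℝ)..x₂, ∫ τ₃ in (0:ℝ)..x₃,
      (x₃ - τ₃) * d.φ112 i₄ τ₁ τ₂ τ₃ by
      fun_prop).integral_hasStrictDerivAt 0 x₁).hasDerivAt.const_mul (x₄ ^ (i₄ : ℕ))
  have h₁₃ := HasDerivAt.fun_sum (u := Finset.univ) fun (i₃ : Fin 2) _ =>
    ((show Continuous fun τ₁ => ∫ τ₂ in (0:ℝ)..x₂, ∫ τ₄ in (0:ℝ)..x₄,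
      (x₄ - τ₄) * d.φ11d2 i₃ τ₁ τ₂ τ₄ by
      fun_prop).integral_hasStrictDerivAt 0 x₁).hasDerivAt.const_mul (x₃ ^ (i₃ : ℕ))
  have h₁₅ := (show Continuous fun τ₁ => ∫ τ₃ in (0:ℝ)..x₃, ∫ τ₄ in (0:ℝ)..x₄,
      (x₃ - τ₃) * (x₄ - τ₄) * d.φ1022 τ₁ τ₃ τ₄ by
      fun_prop).integral_hasStrictDerivAt 0 x₁
  exact ((hasDerivAt_const _ _).fun_add h₂ |>.fun_add (hasDerivAt_const _ _)
    |>.fun_add (hasDerivAt_const _ _) |>.fun_add (hasDerivAt_const _ _) |>.fun_add h₆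
    |>.fun_add h₇ |>.fun_add h₈ |>.fun_add (hasDerivAt_const _ _)
    |>.fun_add (hasDerivAt_const _ _) |>.fun_add (hasDerivAt_const _ _) |>.fun_add h₁₂
    |>.fun_add h₁₃ |>.fun_add (hasDerivAt_const _ _) |>.fun_add h₁₅.hasDerivAt).congr_deriv
    (by simp [F, partialX₁]; ring)

variable {h₁ h₂ h₃ h₄ : ℝ}

structure EqOnFirstX₁ (e d : GoursatData) (h₁ h₂ h₃ h₄ : ℝ) : Prop where
  φ10 : ∀ i₃ i₄, ∀ a ∈ Icc 0 h₁, e.φ10 i₃ i₄ a = d.φ10 i₃ i₄ a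
  φ11 : ∀ i₃ i₄, ∀ a ∈ Icc 0 h₁, ∀ b ∈ Icc 0 h₂, e.φ11 i₃ i₄ a b = d.φ11 i₃ i₄ a b
  φ102 : ∀ i₄, ∀ a ∈ Icc 0 h₁, ∀ b ∈ Icc 0 h₃, e.φ102 i₄ a b = d.φ102 i₄ a b
  φ10d2 : ∀ i₃, ∀ a ∈ Icc 0 h₁, ∀ b ∈ Icc 0 h₄, e.φ10d2 i₃ a b = d.φ10d2 i₃ a b
  φ112 : ∀ i₄, ∀ a ∈ Icc 0 h₁, ∀ b ∈ Icc 0 h₂, ∀ c ∈ Icc 0 h₃,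
    e.φ112 i₄ a b c = d.φ112 i₄ a b c
  φ11d2 : ∀ i₃, ∀ a ∈ Icc 0 h₁, ∀ b ∈ Icc 0 h₂, ∀ c ∈ Icc 0 h₄,
    e.φ11d2 i₃ a b c = d.φ11d2 i₃ a b c
  φ1022 : ∀ a ∈ Icc 0 h₁, ∀ b ∈ Icc 0 h₃, ∀ c ∈ Icc 0 h₄, e.φ1022 a b c = d.φ1022 a b c

theorem ContOn.exists_continuousFirstX₁ (hd : d.ContOn h₁ h₂ h₃ h₄) :
    ∃ e : GoursatData, e.ContinuousFirstX₁ ∧ e.EqOnFirstX₁ d h₁ h₂ h₃ h₄ := by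
  obtain ⟨h10, -, -, -, h11, h102, h10d2, -, -, -, h112, h11d2, -, h1022⟩ := hd
  choose ψ10 c10 e10 using fun i₃ i₄ => exists_continuous_eqOn isClosed_Icc (h10 i₃ i₄)
  choose ψ11 c11 e11 using fun i₃ i₄ =>
    exists_continuous_eqOn (isClosed_Icc.prod isClosed_Icc) (h11 i₃ i₄)
  choose ψ102 c102 e102 using fun i₄ =>
    exists_continuous_eqOn (isClosed_Icc.prod isClosed_Icc) (h102 i₄)
  choose ψ10d2 c10d2 e10d2 using fun i₃ =>
    exists_continuous_eqOn (isClosed_Icc.prod isClosed_Icc) (h10d2 i₃)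
  choose ψ112 c112 e112 using fun i₄ =>
    exists_continuous_eqOn (isClosed_Icc.prod (isClosed_Icc.prod isClosed_Icc)) (h112 i₄)
  choose ψ11d2 c11d2 e11d2 using fun i₃ =>
    exists_continuous_eqOn (isClosed_Icc.prod (isClosed_Icc.prod isClosed_Icc)) (h11d2 i₃)
  obtain ⟨ψ1022, c1022, e1022⟩ :=
    exists_continuous_eqOn (isClosed_Icc.prod (isClosed_Icc.prod isClosed_Icc)) h1022
  exact ⟨{ d with
      φ10 := ψ10
      φ11 := fun i₃ i₄ a b => ψ11 i₃ i₄ (a, b)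
      φ102 := fun i₄ a b => ψ102 i₄ (a, b)
      φ10d2 := fun i₃ a b => ψ10d2 i₃ (a, b)
      φ112 := fun i₄ a b c => ψ112 i₄ (a, b, c)
      φ11d2 := fun i₃ a b c => ψ11d2 i₃ (a, b, c)
      φ1022 := fun a b c => ψ1022 (a, b, c) },
    ⟨c10, c11, c102, c10d2, c112, c11d2, c1022⟩,
    ⟨e10, fun i₃ i₄ a ha b hb => e11 i₃ i₄ (mk_mem_prod ha hb),
      fun i₄ a ha b hb => e102 i₄ (mk_mem_prod ha hb),
      fun i₃ a ha b hb => e10d2 i₃ (mk_mem_prod ha hb),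
      fun i₄ a ha b hb c hc => e112 i₄ (mk_mem_prod ha (mk_mem_prod hb hc)),
      fun i₃ a ha b hb c hc => e11d2 i₃ (mk_mem_prod ha (mk_mem_prod hb hc)),
      fun a ha b hb c hc => e1022 (mk_mem_prod ha (mk_mem_prod hb hc))⟩⟩

def withFirstX₁ (d e : GoursatData) : GoursatData where
  __ := d
  φ10 := e.φ10
  φ11 := e.φ11
  φ102 := e.φ102
  φ10d2 := e.φ10d2
  φ112 := e.φ112
  φ11d2 := e.φ11d2
  φ1022 := e.φ1022

theorem ContinuousFirstX₁.withFirstX₁ {e : GoursatData} (he : e.ContinuousFirstX₁) :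
    (d.withFirstX₁ e).ContinuousFirstX₁ :=
  ⟨he.φ10, he.φ11, he.φ102, he.φ10d2, he.φ112, he.φ11d2, he.φ1022⟩

theorem g0_withFirstX₁ {e : GoursatData} (hed : e.EqOnFirstX₁ d h₁ h₂ h₃ h₄) {x₁ x₂ x₃ x₄ : ℝ}
    (hx₁ : x₁ ∈ Icc 0 h₁) (hx₂ : x₂ ∈ Icc 0 h₂) (hx₃ : x₃ ∈ Icc 0 h₃) (hx₄ : x₄ ∈ Icc 0 h₄) :
    (d.withFirstX₁ e).g0 x₁ x₂ x₃ x₄ = d.g0 x₁ x₂ x₃ x₄ := by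
  have r10 : ∀ i₃ i₄, ∫ τ₁ in (0:ℝ)..x₁, e.φ10 i₃ i₄ τ₁ = ∫ τ₁ in (0:ℝ)..x₁, d.φ10 i₃ i₄ τ₁ :=
    fun i₃ i₄ => integral_eq_of_eqOn_Icc hx₁ (hed.φ10 i₃ i₄)
  have r11 : ∀ i₃ i₄, ∫ τ₁ in (0:ℝ)..x₁, ∫ τ₂ in (0:ℝ)..x₂, e.φ11 i₃ i₄ τ₁ τ₂
      = ∫ τ₁ in (0:ℝ)..x₁, ∫ τ₂ in (0:ℝ)..x₂, d.φ11 i₃ i₄ τ₁ τ₂ := fun i₃ i₄ =>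
    integral_eq_of_eqOn_Icc hx₁ fun τ₁ hτ₁ =>
      integral_eq_of_eqOn_Icc hx₂ (hed.φ11 i₃ i₄ τ₁ hτ₁)
  have r102 : ∀ i₄, ∫ τ₁ in (0:ℝ)..x₁, ∫ τ₃ in (0:ℝ)..x₃, (x₃ - τ₃) * e.φ102 i₄ τ₁ τ₃
      = ∫ τ₁ in (0:ℝ)..x₁, ∫ τ₃ in (0:ℝ)..x₃, (x₃ - τ₃) * d.φ102 i₄ τ₁ τ₃ := fun i₄ =>
    integral_eq_of_eqOn_Icc hx₁ fun τ₁ hτ₁ => integral_eq_of_eqOn_Icc hx₃ fun τ₃ hτ₃ => by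
      simp only [hed.φ102 i₄ τ₁ hτ₁ τ₃ hτ₃]
  have r10d2 : ∀ i₃, ∫ τ₁ in (0:ℝ)..x₁, ∫ τ₄ in (0:ℝ)..x₄, (x₄ - τ₄) * e.φ10d2 i₃ τ₁ τ₄
      = ∫ τ₁ in (0:ℝ)..x₁, ∫ τ₄ in (0:ℝ)..x₄, (x₄ - τ₄) * d.φ10d2 i₃ τ₁ τ₄ := fun i₃ =>
    integral_eq_of_eqOn_Icc hx₁ fun τ₁ hτ₁ => integral_eq_of_eqOn_Icc hx₄ fun τ₄ hτ₄ => by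
      simp only [hed.φ10d2 i₃ τ₁ hτ₁ τ₄ hτ₄]
  have r112 : ∀ i₄, ∫ τ₁ in (0:ℝ)..x₁, ∫ τ₂ in (0:ℝ)..x₂, ∫ τ₃ in (0:ℝ)..x₃,
        (x₃ - τ₃) * e.φ112 i₄ τ₁ τ₂ τ₃
      = ∫ τ₁ in (0:ℝ)..x₁, ∫ τ₂ in (0:ℝ)..x₂, ∫ τ₃ in (0:ℝ)..x₃,
        (x₃ - τ₃) * d.φ112 i₄ τ₁ τ₂ τ₃ := fun i₄ =>
    integral_eq_of_eqOn_Icc hx₁ fun τ₁ hτ₁ => integral_eq_of_eqOn_Icc hx₂ fun τ₂ hτ₂ =>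
      integral_eq_of_eqOn_Icc hx₃ fun τ₃ hτ₃ => by simp only [hed.φ112 i₄ τ₁ hτ₁ τ₂ hτ₂ τ₃ hτ₃]
  have r11d2 : ∀ i₃, ∫ τ₁ in (0:ℝ)..x₁, ∫ τ₂ in (0:ℝ)..x₂, ∫ τ₄ in (0:ℝ)..x₄,
        (x₄ - τ₄) * e.φ11d2 i₃ τ₁ τ₂ τ₄
      = ∫ τ₁ in (0:ℝ)..x₁, ∫ τ₂ in (0:ℝ)..x₂, ∫ τ₄ in (0:ℝ)..x₄,
        (x₄ - τ₄) * d.φ11d2 i₃ τ₁ τ₂ τ₄ := fun i₃ =>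
    integral_eq_of_eqOn_Icc hx₁ fun τ₁ hτ₁ => integral_eq_of_eqOn_Icc hx₂ fun τ₂ hτ₂ =>
      integral_eq_of_eqOn_Icc hx₄ fun τ₄ hτ₄ => by simp only [hed.φ11d2 i₃ τ₁ hτ₁ τ₂ hτ₂ τ₄ hτ₄]
  have r1022 : ∫ τ₁ in (0:ℝ)..x₁, ∫ τ₃ in (0:ℝ)..x₃, ∫ τ₄ in (0:ℝ)..x₄,
        (x₃ - τ₃) * (x₄ - τ₄) * e.φ1022 τ₁ τ₃ τ₄
      = ∫ τ₁ in (0:ℝ)..x₁, ∫ τ₃ in (0:ℝ)..x₃, ∫ τ₄ in (0:ℝ)..x₄,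
        (x₃ - τ₃) * (x₄ - τ₄) * d.φ1022 τ₁ τ₃ τ₄ :=
    integral_eq_of_eqOn_Icc hx₁ fun τ₁ hτ₁ => integral_eq_of_eqOn_Icc hx₃ fun τ₃ hτ₃ =>
      integral_eq_of_eqOn_Icc hx₄ fun τ₄ hτ₄ => by simp only [hed.φ1022 τ₁ hτ₁ τ₃ hτ₃ τ₄ hτ₄]
  simp only [g0, withFirstX₁, r10, r11, r102, r10d2, r112, r11d2, r1022]

end GoursatData

theorem goursat_g0_condition_V1022_general
    (h₁ h₂ h₃ h₄ : ℝ)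
    (d : GoursatData) (hd : d.ContOn h₁ h₂ h₃ h₄) :
    ∃ u₁ u₂ u₃ u₄ : ℝ → ℝ → ℝ → ℝ → ℝ,
      (∀ x₁ ∈ Icc (0:ℝ) h₁, ∀ x₂ ∈ Icc (0:ℝ) h₂, ∀ x₃ ∈ Icc (0:ℝ) h₃, ∀ x₄ ∈ Icc (0:ℝ) h₄,
        HasDerivWithinAt (fun t => d.g0 t x₂ x₃ x₄) (u₁ x₁ x₂ x₃ x₄) (Icc 0 h₁) x₁) ∧
      (∀ x₁ ∈ Icc (0:ℝ) h₁, ∀ x₂ ∈ Icc (0:ℝ) h₂, ∀ x₃ ∈ Icc (0:ℝ) h₃, ∀ x₄ ∈ Icc (0:ℝ) h₄,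
        HasDerivWithinAt (fun t => u₁ x₁ x₂ t x₄) (u₂ x₁ x₂ x₃ x₄) (Icc 0 h₃) x₃) ∧
      (∀ x₁ ∈ Icc (0:ℝ) h₁, ∀ x₂ ∈ Icc (0:ℝ) h₂, ∀ x₃ ∈ Icc (0:ℝ) h₃, ∀ x₄ ∈ Icc (0:ℝ) h₄,
        HasDerivWithinAt (fun t => u₂ x₁ x₂ t x₄) (u₃ x₁ x₂ x₃ x₄) (Icc 0 h₃) x₃) ∧
      (∀ x₁ ∈ Icc (0:ℝ) h₁, ∀ x₂ ∈ Icc (0:ℝ) h₂, ∀ x₃ ∈ Icc (0:ℝ) h₃, ∀ x₄ ∈ Icc (0:ℝ) h₄,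
        HasDerivWithinAt (fun t => u₃ x₁ x₂ x₃ t) (u₄ x₁ x₂ x₃ x₄) (Icc 0 h₄) x₄) ∧
      (∀ x₁ ∈ Icc (0:ℝ) h₁, ∀ x₂ ∈ Icc (0:ℝ) h₂, ∀ x₃ ∈ Icc (0:ℝ) h₃, ∀ x₄ ∈ Icc (0:ℝ) h₄,
        HasDerivWithinAt (fun t => u₄ x₁ x₂ x₃ t) (d.φ1022 x₁ x₃ x₄) (Icc 0 h₄) x₄) := by
  obtain ⟨e, he, hed⟩ := hd.exists_continuousFirstX₁
  set d' := d.withFirstX₁ e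
  have hd' : d'.ContinuousFirstX₁ := he.withFirstX₁
  refine ⟨fun x₁ x₂ x₃ x₄ => (d'.partialX₁ x₁).F x₂ x₃ x₄,
    fun x₁ x₂ x₃ x₄ => (d'.partialX₁ x₁).F₃ x₂ x₃ x₄,
    fun x₁ x₂ x₃ x₄ => (d'.partialX₁ x₁).F₃₃ x₂ x₃ x₄,
    fun x₁ x₂ x₃ x₄ => (d'.partialX₁ x₁).F₃₃₄ x₂ x₃ x₄, ?_, ?_, ?_, ?_, ?_⟩ <;>
    intro x₁ hx₁ x₂ hx₂ x₃ hx₃ x₄ hx₄ <;>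
    have hslice := hd'.continuousSecondX₃_partialX₁ x₁
  · exact (GoursatData.hasDerivAt_g0 hd' x₁ x₂ x₃ x₄).hasDerivWithinAt.congr
      (fun t ht => (GoursatData.g0_withFirstX₁ hed ht hx₂ hx₃ hx₄).symm)
      (GoursatData.g0_withFirstX₁ hed hx₁ hx₂ hx₃ hx₄).symm
  · exact (GoursatData.hasDerivAt_F hslice x₂ x₃ x₄).hasDerivWithinAt
  · exact (GoursatData.hasDerivAt_F₃ hslice x₂ x₃ x₄).hasDerivWithinAt
  · exact (GoursatData.hasDerivAt_F₃₃ hslice.φ0022 hslice.φ0122 x₂ x₃ x₄).hasDerivWithinAt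
  · rw [← hed.φ1022 x₁ hx₁ x₃ hx₃ x₄ hx₄]
    simpa [d', GoursatData.partialX₁, GoursatData.withFirstX₁] using
      (GoursatData.hasDerivAt_F₃₃₄ hslice.φ0022 hslice.φ0122 x₂ x₃ x₄).hasDerivWithinAt
        (s := Icc 0 h₄)

/-- `g₀` satisfies the nonclassical Goursat condition `V_{1,0,2,2}`:
applying successively `∂/∂x₁`, then `∂/∂x₃` twice, then `∂/∂x₄` twice (each derivative
existing at every point of `Ḡ`, one-sidedly at boundary points) yields the function
`(x₁,x₂,x₃,x₄) ↦ φ_{1,0,2,2}(x₁,x₃,x₄)`; in particular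
`D₁D₃²D₄² g₀(x₁,0,x₃,x₄) = φ_{1,0,2,2}(x₁,x₃,x₄)`. -/
theorem goursat_g0_condition_V1022
    (h₁ h₂ h₃ h₄ : ℝ) (hh₁ : 0 < h₁) (hh₂ : 0 < h₂) (hh₃ : 0 < h₃) (hh₄ : 0 < h₄)
    (d : GoursatData) (hd : d.ContOn h₁ h₂ h₃ h₄) :
    ∃ u₁ u₂ u₃ u₄ : ℝ → ℝ → ℝ → ℝ → ℝ,
      (∀ x₁ ∈ Icc (0:ℝ) h₁, ∀ x₂ ∈ Icc (0:ℝ) h₂, ∀ x₃ ∈ Icc (0:ℝ) h₃, ∀ x₄ ∈ Icc (0:ℝ) h₄,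
        HasDerivWithinAt (fun t => d.g0 t x₂ x₃ x₄) (u₁ x₁ x₂ x₃ x₄) (Icc 0 h₁) x₁) ∧
      (∀ x₁ ∈ Icc (0:ℝ) h₁, ∀ x₂ ∈ Icc (0:ℝ) h₂, ∀ x₃ ∈ Icc (0:ℝ) h₃, ∀ x₄ ∈ Icc (0:ℝ) h₄,
        HasDerivWithinAt (fun t => u₁ x₁ x₂ t x₄) (u₂ x₁ x₂ x₃ x₄) (Icc 0 h₃) x₃) ∧
      (∀ x₁ ∈ Icc (0:ℝ) h₁, ∀ x₂ ∈ Icc (0:ℝ) h₂, ∀ x₃ ∈ Icc (0:ℝ) h₃, ∀ x₄ ∈ Icc (0:ℝ) h₄,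
        HasDerivWithinAt (fun t => u₂ x₁ x₂ t x₄) (u₃ x₁ x₂ x₃ x₄) (Icc 0 h₃) x₃) ∧
      (∀ x₁ ∈ Icc (0:ℝ) h₁, ∀ x₂ ∈ Icc (0:ℝ) h₂, ∀ x₃ ∈ Icc (0:ℝ) h₃, ∀ x₄ ∈ Icc (0:ℝ) h₄,
        HasDerivWithinAt (fun t => u₃ x₁ x₂ x₃ t) (u₄ x₁ x₂ x₃ x₄) (Icc 0 h₄) x₄) ∧
      (∀ x₁ ∈ Icc (0:ℝ) h₁, ∀ x₂ ∈ Icc (0:ℝ) h₂, ∀ x₃ ∈ Icc (0:ℝ) h₃, ∀ x₄ ∈ Icc (0:ℝ) h₄,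
        HasDerivWithinAt (fun t => u₄ x₁ x₂ x₃ t) (d.φ1022 x₁ x₃ x₄) (Icc 0 h₄) x₄) :=
  goursat_g0_condition_V1022_general h₁ h₂ h₃ h₄ d hd
end
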